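/- arXiv:2310.00931 — 5 statements merged into one kernel-verified Lean document; each statement's English description precedes it below -/
import Mathlib

section
/- Let Δ be an odd positive integer. Every finite simple graph G with maximum degree at most Δ admits a partition of its edge set into (Δ-1)/2 + 1 parts, each of which spans a pseudoforest, such that one of the parts F is acyclic, every connected component of F is a star, and every connected component of F has at most (Δ+1)/2 edges. -/
set_option maxHeartbeats 1600000


open SimpleGraph

/-- The set of edges of the connected component `c` of the graph `H`. -/
def compEdges {V : Type*} (H : SimpleGraph V) (c : H.ConnectedComponent) : Set (Sym2 V) :=
  {e | e ∈ H.edgeSet ∧ ∀ v ∈ e, v ∈ c.supp}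

/-- A graph is a pseudoforest if every connected component has at most as many
edges as vertices (equivalently, every component contains at most one cycle). -/
def IsPseudoforest {V : Type*} (H : SimpleGraph V) : Prop :=
  ∀ c : H.ConnectedComponent, (compEdges H c).ncard ≤ c.supp.ncard

/-- `P` is a partition of the edge set of `G` into `m` parts,
each of which spans a pseudoforest. -/
def IsPseudoforestDecomp {V : Type*} (G : SimpleGraph V) (m : ℕ)
    (P : Fin m → Set (Sym2 V)) : Prop :=
  (∀ i, P i ⊆ G.edgeSet) ∧ (∀ i j, i ≠ j → Disjoint (P i) (P j)) ∧
    (⋃ i, P i) = G.edgeSet ∧ ∀ i, IsPseudoforest (SimpleGraph.fromEdgeSet (P i))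



section helpers
variable {V : Type}

lemma ctr_eq_of_reachable {H : SimpleGraph V} {c : V → V}
    (hc : ∀ u w, H.Adj u w → c u = c w) {u w : V} (h : H.Reachable u w) : c u = c w := by
  obtain ⟨p⟩ := h
  induction p with
  | nil => rfl
  | cons h p ih => exact (hc _ _ h).trans ih


lemma star_acyclic {H : SimpleGraph V} {c : V → V}
    (hc : ∀ u w, H.Adj u w → c u = c w ∧ (c u = u ∨ c u = w)) : H.IsAcyclic := by
  intro v p hp
  have h3 := hp.three_le_length
  cases p with
  | nil => simp at h3
  | cons h₁ q =>
    cases q with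
    | nil => simp at h3
    | cons h₂ r =>
      cases r with
      | nil => simp at h3
      | cons h₃ s =>
        rename_i u w x
        have hn := hp.support_nodup
        simp only [Walk.support_cons, List.tail_cons, List.nodup_cons] at hn
        have hz1 := hc _ _ h₁
        have hz2 := hc _ _ h₂
        have hz3 := hc _ _ h₃
        rcases hz2.2 with hu | hw
        · -- c u = u
          rcases hz3.2 with hww | hx
          · exact h₂.ne (hu ▸ hww ▸ hz2.1)
          · have : u = x := by rw [← hu, hz2.1, hx]
            exact hn.1 (by rw [this]; exact List.mem_cons_of_mem _ s.start_mem_support)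
        · -- c u = w
          have hcv : c v = w := hz1.1.trans hw
          rcases hz1.2 with hv | hu'
          · -- w = v
            have : w = v := by rw [← hcv, hv]
            exact hn.2.1 (this ▸ s.end_mem_support)
          · exact h₂.ne (hu'.symm.trans (hz1.1.trans hw))


end helpers

section counting
open Finset
variable {V : Type} [Fintype V] [DecidableEq V]

variable {V : Type} [Fintype V] [DecidableEq V]

/-- # edges of `s` incident to `v` is at most the degree of `v`. -/
lemma card_filter_mem_le_degree (H : SimpleGraph V) [DecidableRel H.Adj]
    (s : Finset (Sym2 V)) (hs : ∀ e ∈ s, e ∈ H.edgeSet) (v : V) :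
    (s.filter (fun e => v ∈ e)).card ≤ H.degree v := by
  rw [← SimpleGraph.card_neighborFinset_eq_degree]
  apply Finset.card_le_card_of_injOn (fun e => if h : v ∈ e then Sym2.Mem.other' h else v)
  · intro e he
    simp only [mem_coe, mem_filter] at he ⊢
    rw [dif_pos he.2]
    rw [SimpleGraph.mem_neighborFinset, ← SimpleGraph.mem_edgeSet, Sym2.other_spec' he.2]
    exact hs e he.1
  · intro e₁ he₁ e₂ he₂ hee
    simp only [mem_coe, mem_filter] at he₁ he₂
    simp only [dif_pos he₁.2, dif_pos he₂.2] at hee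
    rw [← Sym2.other_spec' he₁.2, ← Sym2.other_spec' he₂.2, hee]

/-- Double counting: if all degrees are at most `d`, then
`2 * |s| ≤ d * |V(s)|` for a set `s` of edges. -/
lemma two_mul_card_le (H : SimpleGraph V) [DecidableRel H.Adj] {d : ℕ}
    (hd : ∀ v, H.degree v ≤ d) (s : Finset (Sym2 V)) (hs : ∀ e ∈ s, e ∈ H.edgeSet) :
    2 * s.card ≤ d * (s.biUnion (fun e => Finset.univ.filter (· ∈ e))).card := by
  set Vs := s.biUnion (fun e => Finset.univ.filter (· ∈ e)) with hVs
  have key : ∀ e ∈ s, (Vs.filter (· ∈ e)).card = 2 := by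
    intro e he
    induction e with
    | _ a b =>
      have hne : a ≠ b := by
        intro h; have := hs _ he; rw [SimpleGraph.mem_edgeSet] at this; exact this.ne (h ▸ rfl)
      have : Vs.filter (· ∈ (s(a,b) : Sym2 V)) = {a, b} := by
        ext v
        simp only [mem_filter, mem_insert, mem_singleton, Sym2.mem_iff, hVs, mem_biUnion,
          mem_univ, true_and]
        constructor
        · rintro ⟨_, h⟩; exact h
        · rintro (rfl | rfl)
          · exact ⟨⟨s(v,b), he, by simp⟩, Or.inl rfl⟩
          · exact ⟨⟨s(a,v), he, by simp⟩, Or.inr rfl⟩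
      rw [this, card_insert_of_notMem (by simpa using hne), card_singleton]
  calc 2 * s.card = ∑ e ∈ s, (Vs.filter (· ∈ e)).card := by
        rw [Finset.sum_congr rfl key, Finset.sum_const, smul_eq_mul, mul_comm]
    _ = ∑ e ∈ s, ∑ v ∈ Vs, if v ∈ e then 1 else 0 := by
        apply Finset.sum_congr rfl; intro e _; rw [Finset.card_filter]
    _ = ∑ v ∈ Vs, ∑ e ∈ s, if v ∈ e then 1 else 0 := Finset.sum_comm
    _ = ∑ v ∈ Vs, (s.filter (fun e => v ∈ e)).card := by
        apply Finset.sum_congr rfl; intro v _; rw [Finset.card_filter]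
    _ ≤ ∑ v ∈ Vs, d := by
        apply Finset.sum_le_sum; intro v _
        exact (card_filter_mem_le_degree H s hs v).trans (hd v)
    _ = d * Vs.card := by rw [Finset.sum_const, smul_eq_mul, mul_comm]

/-- If all degrees are ≤ d and all degrees in T equal d > 0 then |T| ≤ |N(T)|. -/
lemma card_le_card_biUnion_nbr (H : SimpleGraph V) [DecidableRel H.Adj] {d : ℕ} (hd0 : 0 < d)
    (hd : ∀ v, H.degree v ≤ d) (T : Finset V) (hT : ∀ v ∈ T, H.degree v = d) :
    T.card ≤ (T.biUnion (fun v => H.neighborFinset v)).card := by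
  set NT := T.biUnion (fun v => H.neighborFinset v) with hNT
  have key : ∀ v ∈ T, (NT.filter (fun u => H.Adj v u)).card = d := by
    intro v hv
    have : NT.filter (fun u => H.Adj v u) = H.neighborFinset v := by
      ext u
      simp only [mem_filter, SimpleGraph.mem_neighborFinset]
      refine ⟨fun h => h.2, fun h => ⟨?_, h⟩⟩
      rw [hNT]; exact mem_biUnion.2 ⟨v, hv, (SimpleGraph.mem_neighborFinset _ _ _).2 h⟩
    rw [this, SimpleGraph.card_neighborFinset_eq_degree, hT v hv]
  have calc1 : d * T.card ≤ d * NT.card := by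
    calc d * T.card = ∑ v ∈ T, (NT.filter (fun u => H.Adj v u)).card := by
          rw [Finset.sum_congr rfl key, Finset.sum_const, smul_eq_mul, mul_comm]
      _ = ∑ v ∈ T, ∑ u ∈ NT, if H.Adj v u then 1 else 0 := by
          apply Finset.sum_congr rfl; intro v _; rw [Finset.card_filter]
      _ = ∑ u ∈ NT, ∑ v ∈ T, if H.Adj v u then 1 else 0 := Finset.sum_comm
      _ = ∑ u ∈ NT, (T.filter (fun v => H.Adj v u)).card := by
          apply Finset.sum_congr rfl; intro u _; rw [Finset.card_filter]
      _ ≤ ∑ u ∈ NT, d := by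
          apply Finset.sum_le_sum; intro u _
          refine le_trans ?_ (hd u)
          rw [← SimpleGraph.card_neighborFinset_eq_degree]
          apply Finset.card_le_card
          intro v hv; simp only [mem_filter] at hv
          exact (SimpleGraph.mem_neighborFinset _ _ _).2 hv.2.symm
      _ = d * NT.card := by rw [Finset.sum_const, smul_eq_mul, mul_comm]
  exact Nat.le_of_mul_le_mul_left calc1 hd0

end counting

section fprops
variable {V : Type}

lemma F_props [Fintype V] (G : SimpleGraph V) (k : ℕ) (D0 : Finset V) (M : Finset (Sym2 V))
    (f' : {v // v ∈ D0} → V × Fin k) (hf'inj : Function.Injective f')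
    (hfadj : ∀ v : {v // v ∈ D0}, G.Adj v.1 (f' v).1)
    (hM_edge : ∀ m ∈ M, m ∈ G.edgeSet)
    (hM_disj : ∀ m ∈ M, ∀ m' ∈ M, m ≠ m' → ∀ x, x ∈ m → x ∉ m')
    (hD0_unmatched : ∀ v ∈ D0, ¬ ∃ m ∈ M, v ∈ m)
    (h_target : ∀ v : {v // v ∈ D0}, (f' v).1 ∉ D0) :
    ∃ F : Set (Sym2 V), F ⊆ G.edgeSet ∧
      (∀ v ∈ D0, ∃ e ∈ F, v ∈ e) ∧
      (∀ x : V, (∃ m ∈ M, x ∈ m) → ∃ e ∈ F, x ∈ e) ∧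
      (fromEdgeSet F).IsAcyclic ∧
      (∀ K : (fromEdgeSet F).ConnectedComponent,
        (∃ z : V, ∀ e ∈ compEdges (fromEdgeSet F) K, z ∈ e) ∧
        (compEdges (fromEdgeSet F) K).ncard ≤ k + 1) ∧
      IsPseudoforest (fromEdgeSet F) := by
  classical
  set hasLeaf : V → Prop := fun x => ∃ v : {v // v ∈ D0}, (f' v).1 = x with hhasLeaf
  set matched : V → Prop := fun x => ∃ m ∈ M, x ∈ m with hmatched
  set leafE : Set (Sym2 V) := Set.range (fun v : {v // v ∈ D0} => s(v.1, (f' v).1)) with hleafE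
  set kept : Set (Sym2 V) := {m | m ∈ M ∧ ¬ ∀ x ∈ m, hasLeaf x} with hkept
  set F : Set (Sym2 V) := leafE ∪ kept with hF
  -- uniqueness of the matching edge through a vertex
  have m_unique : ∀ {m m' : Sym2 V}, m ∈ M → m' ∈ M → ∀ {x : V}, x ∈ m → x ∈ m' → m = m' := by
    intro m m' hm hm' x hx hx'
    by_contra hne
    exact hM_disj _ hm _ hm' hne x hx hx'
  have FsubE : F ⊆ G.edgeSet := by
    rintro e (⟨v, rfl⟩ | he)
    · exact (hfadj v)
    · exact hM_edge _ he.1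
  set pt : ∀ x : V, matched x → V := fun x h => Sym2.Mem.other' h.choose_spec.2 with hpt
  have pt_spec : ∀ (x : V) (h : matched x) (m : Sym2 V), m ∈ M → x ∈ m →
      pt x h ∈ m ∧ pt x h ≠ x ∧ s(x, pt x h) = m := by
    intro x h m hm hx
    have hch := h.choose_spec
    have hcm : h.choose = m := m_unique hch.1 hm hch.2 hx
    have hspec : s(x, Sym2.Mem.other' hch.2) = h.choose := Sym2.other_spec' hch.2
    have hne : Sym2.Mem.other' hch.2 ≠ x := by
      intro hxx
      have : (h.choose).IsDiag := by
        rw [← hspec, hxx]; exact Sym2.mk_isDiag_iff.mpr rfl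
      exact G.not_isDiag_of_mem_edgeSet (hM_edge _ hch.1) (hcm ▸ this)
    refine ⟨?_, hne, by rw [hpt]; simp only; rw [hspec, hcm]⟩
    rw [hpt]; simp only
    rw [← hcm]; exact Sym2.other_mem' hch.2
  set ctr : V → V := fun x =>
    if hx : x ∈ D0 then (f' ⟨x, hx⟩).1
    else if hm : matched x then
      (if hasLeaf x then x else if hasLeaf (pt x hm) then pt x hm else hm.choose.out.1)
    else x with hctr
  have ctr_D0 : ∀ v : {v // v ∈ D0}, ctr v.1 = (f' v).1 := by
    intro v
    rw [hctr]; simp only [dif_pos v.2, Subtype.coe_eta]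
  have ctr_leafcenter : ∀ x : V, x ∉ D0 → hasLeaf x → ctr x = x := by
    intro x hx hl
    by_cases hm : matched x
    · simp only [hctr, dif_neg hx, dif_pos hm, if_pos hl]
    · simp only [hctr, dif_neg hx, dif_neg hm]
  have ctr_not_D0 : ∀ x : V, ctr x ∉ D0 := by
    intro x
    simp only [hctr]
    split_ifs with h1 h2 h3 h4
    · exact h_target _
    · exact h1
    · intro hD
      refine hD0_unmatched _ hD ?_
      obtain ⟨hm1, hm2⟩ := h2.choose_spec
      exact ⟨h2.choose, hm1, (pt_spec x h2 _ hm1 hm2).1⟩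
    · intro hD
      refine hD0_unmatched _ hD ?_
      obtain ⟨hm1, hm2⟩ := h2.choose_spec
      exact ⟨h2.choose, hm1, Sym2.out_fst_mem _⟩
    · exact h1
  have EDGE : ∀ a b : V, (s(a,b) : Sym2 V) ∈ F → ctr a = ctr b ∧ (ctr a = a ∨ ctr a = b) := by
    intro a b hab
    rcases hab with ⟨v, hv⟩ | ⟨hmM, hnb⟩
    · have hkey : ∀ (w : {v // v ∈ D0}), ctr w.1 = (f' w).1 ∧ ctr (f' w).1 = (f' w).1 :=
        fun w => ⟨ctr_D0 w, ctr_leafcenter _ (h_target w) ⟨w, rfl⟩⟩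
      rw [Sym2.eq_iff] at hv
      obtain ⟨h1, h2⟩ := hkey v
      rcases hv with ⟨ha, hb⟩ | ⟨ha, hb⟩
      · rw [← ha, ← hb]
        exact ⟨h1.trans h2.symm, Or.inr h1⟩
      · rw [← ha, ← hb]
        exact ⟨h2.trans h1.symm, Or.inl h2⟩
    · have hma : a ∈ (s(a,b) : Sym2 V) := Sym2.mem_mk_left a b
      have hmb : b ∈ (s(a,b) : Sym2 V) := Sym2.mem_mk_right a b
      have hne : a ≠ b := fun h => G.not_isDiag_of_mem_edgeSet (hM_edge _ hmM)
        (Sym2.mk_isDiag_iff.mpr h)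
      have hMa : matched a := ⟨_, hmM, hma⟩
      have hMb : matched b := ⟨_, hmM, hmb⟩
      have haD0 : a ∉ D0 := fun h => hD0_unmatched a h hMa
      have hbD0 : b ∉ D0 := fun h => hD0_unmatched b h hMb
      have hpa : pt a hMa = b := by
        obtain ⟨hh1, hh2, _⟩ := pt_spec a hMa _ hmM hma
        rcases Sym2.mem_iff.1 hh1 with h | h
        · exact absurd h hh2
        · exact h
      have hpb : pt b hMb = a := by
        obtain ⟨hh1, hh2, _⟩ := pt_spec b hMb _ hmM hmb
        rcases Sym2.mem_iff.1 hh1 with h | h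
        · exact h
        · exact absurd h hh2
      by_cases hla : hasLeaf a <;> by_cases hlb : hasLeaf b
      · exact absurd (fun x hx => by
          rcases Sym2.mem_iff.1 hx with rfl | rfl
          · exact hla
          · exact hlb) hnb
      · have hca : ctr a = a := by
          simp only [hctr, dif_neg haD0, dif_pos hMa, if_pos hla]
        have hcb : ctr b = a := by
          simp only [hctr, dif_neg hbD0, dif_pos hMb, if_neg hlb]
          rw [hpb, if_pos hla]
        exact ⟨hca.trans hcb.symm, Or.inl hca⟩
      · have hca : ctr a = b := by
          simp only [hctr, dif_neg haD0, dif_pos hMa, if_neg hla]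
          rw [hpa, if_pos hlb]
        have hcb : ctr b = b := by
          simp only [hctr, dif_neg hbD0, dif_pos hMb, if_pos hlb]
        exact ⟨hca.trans hcb.symm, Or.inr hca⟩
      · have hchoosea : hMa.choose = s(a,b) := m_unique hMa.choose_spec.1 hmM hMa.choose_spec.2 hma
        have hchooseb : hMb.choose = s(a,b) := m_unique hMb.choose_spec.1 hmM hMb.choose_spec.2 hmb
        have hlpa : ¬ hasLeaf (pt a hMa) := by rw [hpa]; exact hlb
        have hlpb : ¬ hasLeaf (pt b hMb) := by rw [hpb]; exact hla
        have hca : ctr a = (s(a,b) : Sym2 V).out.1 := by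
          simp only [hctr, dif_neg haD0, dif_pos hMa, if_neg hla, if_neg hlpa, hchoosea]
        have hcb : ctr b = (s(a,b) : Sym2 V).out.1 := by
          simp only [hctr, dif_neg hbD0, dif_pos hMb, if_neg hlb, if_neg hlpb, hchooseb]
        refine ⟨hca.trans hcb.symm, ?_⟩
        have := Sym2.out_fst_mem (s(a,b) : Sym2 V)
        rcases Sym2.mem_iff.1 this with h | h
        · exact Or.inl (hca.trans h)
        · exact Or.inr (hca.trans h)
  set FG := fromEdgeSet F with hFG
  have hFGedge : FG.edgeSet = F := by
    rw [hFG, edgeSet_fromEdgeSet]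
    ext e
    simp only [Set.mem_diff, Set.mem_setOf_eq, and_iff_left_iff_imp]
    exact fun he => G.not_isDiag_of_mem_edgeSet (FsubE he)
  have hadjF : ∀ u w, FG.Adj u w → ctr u = ctr w ∧ (ctr u = u ∨ ctr u = w) := by
    intro u w h
    rw [hFG, fromEdgeSet_adj] at h
    exact EDGE u w h.1
  have hacyc : FG.IsAcyclic := star_acyclic hadjF
  have hreach : ∀ u w : V, FG.Reachable u w → ctr u = ctr w :=
    fun u w h => ctr_eq_of_reachable (fun u w h => (hadjF u w h).1) h
  have hcompz : ∀ (v₀ : V) (e : Sym2 V),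
      e ∈ compEdges FG (FG.connectedComponentMk v₀) → ctr v₀ ∈ e ∧ e ∈ F := by
    intro v₀ e
    induction e using Sym2.ind with
    | _ a b =>
      intro he
      obtain ⟨he1, he2⟩ := he
      have ha : a ∈ (FG.connectedComponentMk v₀).supp := he2 a (Sym2.mem_mk_left a b)
      rw [ConnectedComponent.mem_supp_iff] at ha
      have hr : FG.Reachable a v₀ := ConnectedComponent.exact ha
      have hctrv : ctr a = ctr v₀ := hreach a v₀ hr
      have hee : (s(a,b) : Sym2 V) ∈ F := by rw [← hFGedge]; exact he1
      refine ⟨?_, hee⟩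
      rcases (EDGE a b hee).2 with h | h
      · rw [← hctrv, h]; exact Sym2.mem_mk_left a b
      · rw [← hctrv, h]; exact Sym2.mem_mk_right a b
  have hAz : ∀ z : V, z ∉ D0 → {e : Sym2 V | e ∈ F ∧ z ∈ e}.ncard ≤ k + 1 := by
    intro z hz
    set lAz := {e : Sym2 V | ∃ v : {v // v ∈ D0}, (f' v).1 = z ∧ e = s(v.1, z)} with hlAz
    have hsub : {e : Sym2 V | e ∈ F ∧ z ∈ e} ⊆ lAz ∪ {m : Sym2 V | m ∈ M ∧ z ∈ m} := by
      rintro e ⟨(⟨v, rfl⟩ | hk), hze⟩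
      · left
        simp only [Sym2.mem_iff] at hze
        rcases hze with h | h
        · exact absurd (h ▸ v.2) hz
        · exact ⟨v, h.symm, by rw [h]⟩
      · right; exact ⟨hk.1, hze⟩
    refine le_trans (Set.ncard_le_ncard hsub (Set.toFinite _)) ?_
    refine le_trans (Set.ncard_union_le _ _) ?_
    have h1 : lAz.ncard ≤ k := by
      rcases Set.eq_empty_or_nonempty lAz with h | ⟨e₀, he₀⟩
      · simp [h]
      · obtain ⟨v₀, _, _⟩ := he₀
        have hk' : lAz.ncard ≤ (Set.univ : Set (Fin k)).ncard := by
          apply Set.ncard_le_ncard_of_injOn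
            (fun e => if h : ∃ v : {v // v ∈ D0}, (f' v).1 = z ∧ e = s(v.1, z)
              then (f' h.choose).2 else (f' v₀).2)
          · intro e _; exact Set.mem_univ _
          · intro e₁ he₁ e₂ he₂ heq
            rw [hlAz, Set.mem_setOf_eq] at he₁ he₂
            simp only [dif_pos he₁, dif_pos he₂] at heq
            obtain ⟨hc1, hc2⟩ := he₁.choose_spec
            obtain ⟨hd1, hd2⟩ := he₂.choose_spec
            have : f' he₁.choose = f' he₂.choose := by
              have h1 : (f' he₁.choose).1 = (f' he₂.choose).1 := by rw [hc1, hd1]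
              exact Prod.ext h1 heq
            have hv : he₁.choose = he₂.choose := hf'inj this
            rw [hc2, hd2, hv]
        simpa [Set.ncard_univ] using hk'
    have h2 : {m : Sym2 V | m ∈ M ∧ z ∈ m}.ncard ≤ 1 := by
      rw [Set.ncard_le_one (Set.toFinite _)]
      rintro m ⟨hm1, hm2⟩ m' ⟨hm1', hm2'⟩
      exact m_unique hm1 hm1' hm2 hm2'
    omega
  refine ⟨F, FsubE, ?_, ?_, hacyc, ?_, ?_⟩
  · intro v hv
    exact ⟨s(v, (f' ⟨v,hv⟩).1), Or.inl ⟨⟨v,hv⟩, rfl⟩, Sym2.mem_mk_left _ _⟩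
  · rintro x ⟨m, hm, hxm⟩
    by_cases hkm : ∀ y ∈ m, hasLeaf y
    · obtain ⟨v, hv⟩ := hkm x hxm
      exact ⟨s(v.1, x), Or.inl ⟨v, by show s(v.1, (f' v).1) = s(v.1, x); rw [hv]⟩,
        Sym2.mem_mk_right _ _⟩
    · exact ⟨m, Or.inr ⟨hm, hkm⟩, hxm⟩
  · intro K
    induction K using ConnectedComponent.ind with
    | _ v₀ =>
      refine ⟨⟨ctr v₀, fun e he => ?_⟩, ?_⟩
      · exact (hcompz v₀ e he).1
      refine le_trans (Set.ncard_le_ncard ?_ (Set.toFinite _)) (hAz _ (ctr_not_D0 v₀))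
      intro e he
      exact ⟨(hcompz v₀ e he).2, (hcompz v₀ e he).1⟩
  · intro K
    induction K using ConnectedComponent.ind with
    | _ v₀ =>
      apply Set.ncard_le_ncard_of_injOn
        (fun e => if h : ctr v₀ ∈ e then Sym2.Mem.other' h else v₀)
      · intro e he
        have hz := (hcompz v₀ e he).1
        simp only [dif_pos hz]
        exact he.2 _ (Sym2.other_mem' hz)
      · intro e₁ he₁ e₂ he₂ heq
        have hz₁ := (hcompz v₀ e₁ he₁).1
        have hz₂ := (hcompz v₀ e₂ he₂).1
        simp only [dif_pos hz₁, dif_pos hz₂] at heq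
        rw [← Sym2.other_spec' hz₁, ← Sym2.other_spec' hz₂, heq]

end fprops

theorem odd_max_degree_star_forest_decomposition
    (Δ : ℕ) (hΔpos : 0 < Δ) (hΔodd : Odd Δ)
    (V : Type) [Fintype V] (G : SimpleGraph V)
    (hdeg : ∀ v : V, (G.neighborSet v).ncard ≤ Δ) :
    ∃ P : Fin ((Δ - 1) / 2 + 1) → Set (Sym2 V),
      IsPseudoforestDecomp G ((Δ - 1) / 2 + 1) P ∧
      ∃ i : Fin ((Δ - 1) / 2 + 1),
        (SimpleGraph.fromEdgeSet (P i)).IsAcyclic ∧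
        ∀ K : (SimpleGraph.fromEdgeSet (P i)).ConnectedComponent,
          (∃ v : V, ∀ e ∈ compEdges (SimpleGraph.fromEdgeSet (P i)) K, v ∈ e) ∧
          (compEdges (SimpleGraph.fromEdgeSet (P i)) K).ncard ≤ (Δ + 1) / 2 := by
  classical
  obtain ⟨k, hk⟩ := hΔodd
  subst hk
  have e1 : (2 * k + 1 - 1) / 2 = k := by omega
  have e2 : (2 * k + 1 + 1) / 2 = k + 1 := by omega
  rw [e1, e2]
  have hdeg' : ∀ v : V, G.degree v ≤ 2 * k + 1 := by
    intro v
    have h := hdeg v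
    rwa [Set.ncard_eq_toFinset_card', ← SimpleGraph.neighborFinset_def] at h
  set D : Finset V := Finset.univ.filter (fun v => G.degree v = 2 * k + 1) with hD
  set isM : Finset (Sym2 V) → Prop := fun M => (∀ m ∈ M, m ∈ G.edgeSet ∧ ∀ x ∈ m, x ∈ D) ∧
      (∀ m ∈ M, ∀ m' ∈ M, m ≠ m' → ∀ x, x ∈ m → x ∉ m') with hisM
  obtain ⟨M, hMisM, hMmax⟩ := Set.Finite.exists_maximalFor
    (fun M : Finset (Sym2 V) => M.card) {M | isM M} (Set.toFinite _)
    ⟨∅, by constructor <;> simp⟩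
  obtain ⟨hM_e, hM_disj⟩ := hMisM
  set D0 : Finset V := D.filter (fun v => ¬ ∃ m ∈ M, v ∈ m) with hD0
  have hD0D : ∀ v ∈ D0, v ∈ D := fun v hv => (Finset.mem_filter.1 hv).1
  have hD0_unmatched : ∀ v ∈ D0, ¬ ∃ m ∈ M, v ∈ m := fun v hv => (Finset.mem_filter.1 hv).2
  have hDdeg : ∀ v ∈ D, G.degree v = 2 * k + 1 := fun v hv => (Finset.mem_filter.1 hv).2
  have indep : ∀ v ∈ D0, ∀ w ∈ D0, ¬ G.Adj v w := by
    intro v hv w hw hadj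
    have hnotmem : s(v, w) ∉ M := fun h => hD0_unmatched v hv ⟨_, h, Sym2.mem_mk_left _ _⟩
    have hins : isM (insert s(v,w) M) := by
      constructor
      · intro m hm
        rcases Finset.mem_insert.1 hm with rfl | hm
        · refine ⟨hadj, ?_⟩
          intro x hx
          rcases Sym2.mem_iff.1 hx with rfl | rfl
          · exact hD0D _ hv
          · exact hD0D _ hw
        · exact hM_e m hm
      · intro m hm m' hm' hne x hxm hxm'
        rcases Finset.mem_insert.1 hm with rfl | hm1
        · rcases Finset.mem_insert.1 hm' with h2 | hm2
          · exact hne h2.symm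
          · rcases Sym2.mem_iff.1 hxm with rfl | rfl
            · exact hD0_unmatched x hv ⟨m', hm2, hxm'⟩
            · exact hD0_unmatched x hw ⟨m', hm2, hxm'⟩
        · rcases Finset.mem_insert.1 hm' with rfl | hm2
          · rcases Sym2.mem_iff.1 hxm' with rfl | rfl
            · exact hD0_unmatched _ hv ⟨m, hm1, hxm⟩
            · exact hD0_unmatched _ hw ⟨m, hm1, hxm⟩
          · exact hM_disj m hm1 m' hm2 hne x hxm hxm'
    have hcard : (insert s(v,w) M).card ≤ M.card := hMmax hins (Finset.card_le_card (Finset.subset_insert _ _))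
    rw [Finset.card_insert_of_notMem hnotmem] at hcard
    omega
  -- Hall for the leaf assignment
  have hallcond : ∀ s : Finset {v // v ∈ D0}, s.card ≤
      (s.biUnion (fun v => (G.neighborFinset v.1) ×ˢ (Finset.univ : Finset (Fin k)))).card := by
    intro s
    classical
    have hbi : s.biUnion (fun v => (G.neighborFinset v.1) ×ˢ (Finset.univ : Finset (Fin k)))
        = ((s.image Subtype.val).biUnion (fun v => G.neighborFinset v)) ×ˢ
          (Finset.univ : Finset (Fin k)) := by
      ext p
      constructor
      · intro hp
        obtain ⟨v, hv, hp⟩ := Finset.mem_biUnion.1 hp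
        rw [Finset.mem_product] at hp ⊢
        exact ⟨Finset.mem_biUnion.2 ⟨v.1, Finset.mem_image.2 ⟨v, hv, rfl⟩, hp.1⟩, hp.2⟩
      · intro hp
        rw [Finset.mem_product] at hp
        obtain ⟨h1, h2⟩ := hp
        obtain ⟨a, ha, hp1⟩ := Finset.mem_biUnion.1 h1
        obtain ⟨v, hv, rfl⟩ := Finset.mem_image.1 ha
        exact Finset.mem_biUnion.2 ⟨v, hv, Finset.mem_product.2 ⟨hp1, h2⟩⟩
    rw [hbi, Finset.card_product, Finset.card_univ, Fintype.card_fin]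
    have hTcard : (s.image Subtype.val).card = s.card :=
      Finset.card_image_of_injective _ Subtype.val_injective
    rcases Nat.eq_zero_or_pos k with rfl | hkpos
    · have hTempty : s.image Subtype.val = ∅ := by
        by_contra hne
        obtain ⟨v, hvT⟩ := Finset.nonempty_iff_ne_empty.2 hne
        have hvD0 : v ∈ D0 := by
          obtain ⟨vv, _, rfl⟩ := Finset.mem_image.1 hvT
          exact vv.2
        have hvD : v ∈ D := hD0D v hvD0
        have hdv : G.degree v = 1 := by simpa using hDdeg v hvD
        obtain ⟨u, hu⟩ := Finset.card_pos.1
          (by rw [SimpleGraph.card_neighborFinset_eq_degree]; omega :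
            0 < (G.neighborFinset v).card)
        have hadj : G.Adj v u := (SimpleGraph.mem_neighborFinset _ _ _).1 hu
        have hud : G.degree u = 1 := by
          have h1 : 0 < G.degree u := by
            rw [← SimpleGraph.card_neighborFinset_eq_degree]
            exact Finset.card_pos.2 ⟨v, (SimpleGraph.mem_neighborFinset _ _ _).2 hadj.symm⟩
          have h2 := hdeg' u
          omega
        have huD : u ∈ D := Finset.mem_filter.2 ⟨Finset.mem_univ _, by simpa using hud⟩
        have huD0 : u ∉ D0 := fun h => indep v hvD0 u h hadj
        have hum : ∃ m ∈ M, u ∈ m := by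
          by_contra h
          exact huD0 (Finset.mem_filter.2 ⟨huD, h⟩)
        obtain ⟨m, hmM, hum'⟩ := hum
        have hmE := (hM_e m hmM).1
        have hadjy : G.Adj u (Sym2.Mem.other' hum') := by
          rw [← SimpleGraph.mem_edgeSet, Sym2.other_spec' hum']
          exact hmE
        have hyv : Sym2.Mem.other' hum' = v := by
          have h1 : Sym2.Mem.other' hum' ∈ G.neighborFinset u :=
            (SimpleGraph.mem_neighborFinset _ _ _).2 hadjy
          have h2 : v ∈ G.neighborFinset u :=
            (SimpleGraph.mem_neighborFinset _ _ _).2 hadj.symm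
          have hle : (G.neighborFinset u).card ≤ 1 := by
            rw [SimpleGraph.card_neighborFinset_eq_degree, hud]
          exact Finset.card_le_one.1 hle _ h1 _ h2
        exact hD0_unmatched v hvD0 ⟨m, hmM, hyv ▸ Sym2.other_mem' hum'⟩
      rw [← hTcard, hTempty]
      simp
    · have h1 : (s.image Subtype.val).card ≤
          ((s.image Subtype.val).biUnion (fun v => G.neighborFinset v)).card :=
        card_le_card_biUnion_nbr G (by omega) hdeg' _
          (fun v hv => by
            obtain ⟨vv, _, rfl⟩ := Finset.mem_image.1 hv
            exact hDdeg _ (hD0D _ vv.2))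
      calc s.card = (s.image Subtype.val).card := hTcard.symm
        _ ≤ _ := h1
        _ ≤ _ * k := Nat.le_mul_of_pos_right _ hkpos
  obtain ⟨f', hf'inj, hf'mem⟩ :=
    (Finset.all_card_le_biUnion_card_iff_exists_injective _).1 hallcond
  have hfadj : ∀ v : {v // v ∈ D0}, G.Adj v.1 (f' v).1 := by
    intro v
    have h := hf'mem v
    rw [Finset.mem_product] at h
    exact (SimpleGraph.mem_neighborFinset _ _ _).1 h.1
  have h_target : ∀ v : {v // v ∈ D0}, (f' v).1 ∉ D0 := fun v hv => indep _ v.2 _ hv (hfadj v)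
  obtain ⟨F, hFsub, hFcovD0, hFcovM, hFacyc, hFstar, hFpf⟩ :=
    F_props G k D0 M f' hf'inj hfadj (fun m hm => (hM_e m hm).1) hM_disj hD0_unmatched h_target
  set G' := G.deleteEdges F with hG'
  have hG'edge : G'.edgeSet = G.edgeSet \ F := by rw [hG']; exact G.edgeSet_deleteEdges F
  have hG'le : ∀ u w, G'.Adj u w → G.Adj u w := by
    intro u w h
    rw [hG', SimpleGraph.deleteEdges_adj] at h
    exact h.1
  have hcov : ∀ v ∈ D, ∃ e ∈ F, v ∈ e := by
    intro v hv
    by_cases hvD0 : v ∈ D0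
    · exact hFcovD0 v hvD0
    · refine hFcovM v ?_
      by_contra h
      exact hvD0 (Finset.mem_filter.2 ⟨hv, h⟩)
  have hdegG' : ∀ v, G'.degree v ≤ 2 * k := by
    intro v
    by_cases hv : v ∈ D
    · obtain ⟨e, heF, hve⟩ := hcov v hv
      have hGadj : G.Adj v (Sym2.Mem.other' hve) := by
        rw [← SimpleGraph.mem_edgeSet, Sym2.other_spec' hve]
        exact hFsub heF
      have hnG' : ¬ G'.Adj v (Sym2.Mem.other' hve) := by
        rw [hG', SimpleGraph.deleteEdges_adj]
        rintro ⟨-, hne⟩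
        rw [Sym2.other_spec' hve] at hne
        exact hne heF
      have hsubN : G'.neighborFinset v ⊆ (G.neighborFinset v).erase (Sym2.Mem.other' hve) := by
        intro w hw
        have hadj : G'.Adj v w := (SimpleGraph.mem_neighborFinset _ _ _).1 hw
        rw [Finset.mem_erase]
        exact ⟨fun h => hnG' (h ▸ hadj), (SimpleGraph.mem_neighborFinset _ _ _).2 (hG'le _ _ hadj)⟩
      have hle := Finset.card_le_card hsubN
      rw [Finset.card_erase_of_mem ((SimpleGraph.mem_neighborFinset _ _ _).2 hGadj)] at hle
      have h2 : (G.neighborFinset v).card = 2*k+1 := by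
        rw [SimpleGraph.card_neighborFinset_eq_degree]; exact hDdeg v hv
      rw [← SimpleGraph.card_neighborFinset_eq_degree]
      omega
    · have h1 : G.degree v ≤ 2 * k := by
        have h3 := hdeg' v
        have hne : G.degree v ≠ 2*k+1 := fun h => hv (Finset.mem_filter.2 ⟨Finset.mem_univ _, h⟩)
        omega
      refine le_trans ?_ h1
      rw [← SimpleGraph.card_neighborFinset_eq_degree, ← SimpleGraph.card_neighborFinset_eq_degree]
      apply Finset.card_le_card
      intro w hw
      exact (SimpleGraph.mem_neighborFinset _ _ _).2
        (hG'le _ _ ((SimpleGraph.mem_neighborFinset _ _ _).1 hw))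
  have hall2 : ∀ s : Finset {e // e ∈ G'.edgeFinset}, s.card ≤
      (s.biUnion (fun e => (Finset.univ.filter (· ∈ e.1)) ×ˢ
        (Finset.univ : Finset (Fin k)))).card := by
    intro s
    have hTcard : (s.image Subtype.val).card = s.card :=
      Finset.card_image_of_injective _ Subtype.val_injective
    have hbi : s.biUnion (fun e => (Finset.univ.filter (· ∈ e.1)) ×ˢ
          (Finset.univ : Finset (Fin k)))
        = ((s.image Subtype.val).biUnion (fun e => Finset.univ.filter (· ∈ e))) ×ˢ
          (Finset.univ : Finset (Fin k)) := by
      ext p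
      constructor
      · intro hp
        obtain ⟨e, he, hp⟩ := Finset.mem_biUnion.1 hp
        rw [Finset.mem_product] at hp ⊢
        exact ⟨Finset.mem_biUnion.2 ⟨e.1, Finset.mem_image.2 ⟨e, he, rfl⟩, hp.1⟩, hp.2⟩
      · intro hp
        rw [Finset.mem_product] at hp
        obtain ⟨h1, h2⟩ := hp
        obtain ⟨a, ha, hp1⟩ := Finset.mem_biUnion.1 h1
        obtain ⟨e, he, rfl⟩ := Finset.mem_image.1 ha
        exact Finset.mem_biUnion.2 ⟨e, he, Finset.mem_product.2 ⟨hp1, h2⟩⟩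
    rw [hbi, Finset.card_product, Finset.card_univ, Fintype.card_fin]
    have hdouble := two_mul_card_le G' hdegG' (s.image Subtype.val) (fun e he => by
      obtain ⟨e', he', rfl⟩ := Finset.mem_image.1 he
      exact SimpleGraph.mem_edgeFinset.1 e'.2)
    rw [← hTcard]
    have h2 : 2 * k * ((s.image Subtype.val).biUnion
          (fun e => Finset.univ.filter (· ∈ e))).card
        = 2 * (k * ((s.image Subtype.val).biUnion
          (fun e => Finset.univ.filter (· ∈ e))).card) := by ring
    rw [h2] at hdouble
    have h3 := Nat.le_of_mul_le_mul_left hdouble (by omega : 0 < 2)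
    calc (s.image Subtype.val).card ≤ k * _ := h3
      _ = _ * k := Nat.mul_comm _ _
  obtain ⟨g, hginj, hgmem⟩ := (Finset.all_card_le_biUnion_card_iff_exists_injective _).1 hall2
  have hgfst : ∀ e : {e // e ∈ G'.edgeFinset}, (g e).1 ∈ e.1 := by
    intro e
    have h := hgmem e
    rw [Finset.mem_product] at h
    exact (Finset.mem_filter.1 h.1).2
  set P : Fin (k+1) → Set (Sym2 V) := fun i =>
    if (i : ℕ) < k then {e : Sym2 V | ∃ h : e ∈ G'.edgeFinset, ((g ⟨e, h⟩).2 : ℕ) = (i : ℕ)}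
    else F with hP
  have hPsub : ∀ i, P i ⊆ G.edgeSet := by
    intro i e he
    simp only [hP] at he
    by_cases hik : (i : ℕ) < k
    · rw [if_pos hik] at he
      obtain ⟨h, -⟩ := he
      have h' : e ∈ G'.edgeSet := SimpleGraph.mem_edgeFinset.1 h
      rw [hG'edge] at h'
      exact h'.1
    · rw [if_neg hik] at he
      exact hFsub he
  have hPF : P ⟨k, Nat.lt_succ_self k⟩ = F := by
    simp only [hP]
    rw [if_neg (by simp)]
  have hPdisjF : ∀ e ∈ G'.edgeFinset, e ∉ F := by
    intro e he
    have h' : e ∈ G'.edgeSet := SimpleGraph.mem_edgeFinset.1 he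
    rw [hG'edge] at h'
    exact h'.2
  refine ⟨P, ⟨hPsub, ?_, ?_, ?_⟩, ⟨k, Nat.lt_succ_self k⟩, ?_, ?_⟩
  · intro i j hij
    rw [Set.disjoint_left]
    intro e hei hej
    simp only [hP] at hei hej
    by_cases hik : (i : ℕ) < k <;> by_cases hjk : (j : ℕ) < k
    · rw [if_pos hik] at hei
      rw [if_pos hjk] at hej
      obtain ⟨h1, hv1⟩ := hei
      obtain ⟨h2, hv2⟩ := hej
      exact hij (Fin.ext (hv1.symm.trans hv2))
    · rw [if_pos hik] at hei
      rw [if_neg hjk] at hej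
      obtain ⟨h1, -⟩ := hei
      exact hPdisjF e h1 hej
    · rw [if_neg hik] at hei
      rw [if_pos hjk] at hej
      obtain ⟨h2, -⟩ := hej
      exact hPdisjF e h2 hei
    · refine hij (Fin.ext ?_)
      have hi := i.isLt
      have hj := j.isLt
      omega
  · apply Set.eq_of_subset_of_subset
    · intro e he
      obtain ⟨s, ⟨i, rfl⟩, hes⟩ := he
      exact hPsub i hes
    · intro e he
      by_cases heF : e ∈ F
      · exact Set.mem_iUnion.2 ⟨⟨k, Nat.lt_succ_self k⟩, by rw [hPF]; exact heF⟩
      · have he' : e ∈ G'.edgeFinset := by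
          rw [SimpleGraph.mem_edgeFinset, hG'edge]
          exact ⟨he, heF⟩
        refine Set.mem_iUnion.2 ⟨⟨((g ⟨e, he'⟩).2 : ℕ), by omega⟩, ?_⟩
        simp only [hP]
        rw [if_pos (show ((⟨((g ⟨e, he'⟩).2 : ℕ), by omega⟩ : Fin (k+1)) : ℕ) < k from
          (g ⟨e, he'⟩).2.isLt)]
        exact ⟨he', rfl⟩
  · intro i
    by_cases hik : (i : ℕ) < k
    · have hPi : P i = {e : Sym2 V | ∃ h : e ∈ G'.edgeFinset, ((g ⟨e, h⟩).2 : ℕ) = (i : ℕ)} := by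
        simp only [hP]
        rw [if_pos hik]
    
      intro K
      induction K using ConnectedComponent.ind with
      | _ v₀ =>
        have hmem : ∀ e ∈ compEdges (fromEdgeSet (P i))
            ((fromEdgeSet (P i)).connectedComponentMk v₀),
            ∃ h : e ∈ G'.edgeFinset, ((g ⟨e, h⟩).2 : ℕ) = (i : ℕ) := by
          intro e he
          have h1 := he.1
          rw [SimpleGraph.edgeSet_fromEdgeSet, Set.mem_diff] at h1
          have h2 := h1.1
          rw [hPi] at h2
          exact h2
        apply Set.ncard_le_ncard_of_injOn
          (fun e => if h : e ∈ G'.edgeFinset then (g ⟨e, h⟩).1 else v₀)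
        · intro e he
          obtain ⟨h, -⟩ := hmem e he
          simp only [dif_pos h]
          exact he.2 _ (hgfst ⟨e, h⟩)
        · intro e₁ he₁ e₂ he₂ heq
          obtain ⟨h1, hv1⟩ := hmem e₁ he₁
          obtain ⟨h2, hv2⟩ := hmem e₂ he₂
          simp only [dif_pos h1, dif_pos h2] at heq
          have hsnd : (g ⟨e₁, h1⟩).2 = (g ⟨e₂, h2⟩).2 := Fin.ext (hv1.trans hv2.symm)
          have hge : g ⟨e₁, h1⟩ = g ⟨e₂, h2⟩ := Prod.ext heq hsnd
          exact congrArg Subtype.val (hginj hge)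
    · have hPi : P i = F := by simp only [hP]; rw [if_neg hik]
      rw [hPi]
      exact hFpf
  · rw [hPF]
    exact hFacyc
  · rw [hPF]
    intro K
    exact ⟨(hFstar K).1, (hFstar K).2⟩
end

section
/- A finite simple graph G is a pseudoforest if and only if G admits an orientation of its edges in which every vertex has outdegree at most one. -/
open SimpleGraph

/-- `o` is an orientation of `G`: it assigns to each edge one of its endpoints as head. -/
def IsOrientation {V : Type*} (G : SimpleGraph V) (o : Sym2 V → V) : Prop :=
  ∀ e ∈ G.edgeSet, o e ∈ e

/-- The outdegree of `v` under orientation `o`: the number of edges incident to `v`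
that are oriented away from `v` (i.e. whose head is not `v`). -/
noncomputable def outDeg {V : Type*} (G : SimpleGraph V) (o : Sym2 V → V) (v : V) : ℕ :=
  {e | e ∈ G.edgeSet ∧ v ∈ e ∧ o e ≠ v}.ncard

/-!
Orient each edge away from a chosen endpoint, its tail: outdegrees are at most one exactly when
distinct edges get distinct tails. If they do, the tails of the edges of a component are distinct
vertices of that component, so it has at most as many edges as vertices. Conversely, by Hall's
theorem, such a choice of tails exists as soon as every vertex set `U` spans at most `|U|` edges.
In a pseudoforest, each vertex of a component `C` outside a nonempty `W ⊆ C` can be added to `W`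
along an edge leaving `W`, so `C` has at least `|C \ W|` edges not spanned by `W`, whence `W` spans
at most `|W|` edges; a general `U` is handled one component at a time.
-/

namespace SimpleGraph

variable {V : Type*} {G : SimpleGraph V}

variable (G) in
def edgesWithin (W : Set V) : Set (Sym2 V) :=
  {e | e ∈ G.edgeSet ∧ ∀ v ∈ e, v ∈ W}

@[simp]
theorem mk_mem_edgesWithin {W : Set V} {a b : V} :
    s(a, b) ∈ G.edgesWithin W ↔ G.Adj a b ∧ a ∈ W ∧ b ∈ W := by
  simp [edgesWithin, or_imp, forall_and]

@[simp]
theorem edgesWithin_empty : G.edgesWithin ∅ = ∅ :=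
  Set.eq_empty_of_forall_notMem fun e he => he.2 _ (Sym2.out_fst_mem e)

theorem edgesWithin_mono {W W' : Set V} (h : W ⊆ W') : G.edgesWithin W ⊆ G.edgesWithin W' :=
  fun _ he => ⟨he.1, fun v hv => h (he.2 v hv)⟩

theorem ncard_edgesWithin_lt_insert [Finite V] {W : Set V} {x y : V} (hx : x ∈ W) (hy : y ∉ W)
    (hxy : G.Adj x y) : (G.edgesWithin W).ncard < (G.edgesWithin (insert y W)).ncard := by
  refine Set.ncard_lt_ncard ((Set.ssubset_iff_of_subset
    (edgesWithin_mono (Set.subset_insert y W))).2 ⟨s(x, y), ?_, ?_⟩)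
  · simp [hxy, hx]
  · simp [hy]

theorem ConnectedComponent.exists_adj_of_subset_supp {c : G.ConnectedComponent} {W : Set V}
    (hW : W ⊆ c.supp) (hne : W.Nonempty) (hc : ¬c.supp ⊆ W) :
    ∃ x ∈ W, ∃ y ∈ c.supp, y ∉ W ∧ G.Adj x y := by
  obtain ⟨w, hw⟩ := hne
  obtain ⟨u, hu, huW⟩ := Set.not_subset.1 hc
  obtain ⟨p⟩ := ConnectedComponent.exact ((hW hw).trans hu.symm)
  obtain ⟨d, -, hd, hd'⟩ := p.exists_boundary_dart W hw huW
  exact ⟨d.fst, hd, d.snd, (c.mem_supp_congr_adj d.adj).1 (hW hd), hd', d.adj⟩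

theorem ConnectedComponent.ncard_supp_add_ncard_edgesWithin_le [Finite V]
    (c : G.ConnectedComponent) {W : Set V} (hW : W ⊆ c.supp) (hne : W.Nonempty) :
    c.supp.ncard + (G.edgesWithin W).ncard ≤ (G.edgesWithin c.supp).ncard + W.ncard := by
  by_cases hc : c.supp ⊆ W
  · rw [hW.antisymm hc, add_comm]
  obtain ⟨x, hx, y, hyc, hyW, hxy⟩ := c.exists_adj_of_subset_supp hW hne hc
  have hinsert : (insert y W).ncard = W.ncard + 1 := Set.ncard_insert_of_notMem hyW
  have hedges := ncard_edgesWithin_lt_insert hx hyW hxy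
  have := c.ncard_supp_add_ncard_edgesWithin_le (Set.insert_subset hyc hW)
    (hne.mono (Set.subset_insert y W))
  omega
termination_by c.supp.ncard - W.ncard
decreasing_by
  have := Set.ncard_le_ncard (Set.insert_subset hyc hW)
  omega

theorem exists_injOn_mem_of_ncard_edgesWithin_le [Finite V]
    (h : ∀ U : Set V, (G.edgesWithin U).ncard ≤ U.ncard) :
    ∃ τ : Sym2 V → V, Set.InjOn τ G.edgeSet ∧ ∀ e ∈ G.edgeSet, τ e ∈ e := by
  classical
  obtain ⟨f, hf, hfe⟩ := (Finset.all_card_le_biUnion_card_iff_exists_injective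
    fun e : G.edgeSet => (e : Sym2 V).toFinset).1 fun s => by
      calc s.card = (Subtype.val '' (s : Set G.edgeSet)).ncard := by
            rw [Set.ncard_image_of_injective _ Subtype.val_injective, Set.ncard_coe_finset]
        _ ≤ (G.edgesWithin ↑(s.biUnion fun e => (e : Sym2 V).toFinset)).ncard := by
            refine Set.ncard_le_ncard ?_
            rintro _ ⟨e, he, rfl⟩
            exact ⟨e.2, fun v hv => Finset.mem_biUnion.2 ⟨e, he, Sym2.mem_toFinset.2 hv⟩⟩
        _ ≤ _ := (h _).trans (Set.ncard_coe_finset _).le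
  set τ := Function.extend Subtype.val f fun e : Sym2 V => e.out.1
  have hτ (e : G.edgeSet) : τ e = f e := Subtype.val_injective.extend_apply f _ e
  refine ⟨τ, fun a ha b hb hab => ?_, fun e he => ?_⟩
  · exact congrArg Subtype.val (hf ((hτ ⟨a, ha⟩).symm.trans (hab.trans (hτ ⟨b, hb⟩))))
  · exact (hτ ⟨e, he⟩).symm ▸ Sym2.mem_toFinset.1 (hfe ⟨e, he⟩)

end SimpleGraph

theorem IsPseudoforest.ncard_edgesWithin_le_of_subset_supp {V : Type*} [Finite V]
    {G : SimpleGraph V} (hG : IsPseudoforest G) {c : G.ConnectedComponent} {W : Set V}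
    (hW : W ⊆ c.supp) : (G.edgesWithin W).ncard ≤ W.ncard := by
  rcases W.eq_empty_or_nonempty with rfl | hne
  · simp
  have hc : (G.edgesWithin c.supp).ncard ≤ c.supp.ncard := hG c
  have := c.ncard_supp_add_ncard_edgesWithin_le hW hne
  omega

theorem IsPseudoforest.ncard_edgesWithin_le {V : Type*} [Finite V] {G : SimpleGraph V}
    (hG : IsPseudoforest G) (U : Set V) : (G.edgesWithin U).ncard ≤ U.ncard := by
  rcases U.eq_empty_or_nonempty with rfl | ⟨u, hu⟩
  · simp
  set c := G.connectedComponentMk u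
  have hsplit : G.edgesWithin U ⊆ G.edgesWithin (U ∩ c.supp) ∪ G.edgesWithin (U \ c.supp) := by
    intro e
    induction e using Sym2.ind with
    | h a b =>
      simp only [mk_mem_edgesWithin, Set.mem_union, Set.mem_inter_iff, Set.mem_sdiff]
      rintro ⟨hab, ha, hb⟩
      have := c.mem_supp_congr_adj hab
      tauto
  have : (U \ c.supp).ncard < U.ncard :=
    Set.ncard_lt_ncard (Set.sdiff_ssubset_left_iff.2 ⟨u, hu, rfl⟩)
  calc (G.edgesWithin U).ncard
      ≤ (G.edgesWithin (U ∩ c.supp)).ncard + (G.edgesWithin (U \ c.supp)).ncard :=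
        (Set.ncard_le_ncard hsplit).trans (Set.ncard_union_le _ _)
    _ ≤ (U ∩ c.supp).ncard + (U \ c.supp).ncard :=
        add_le_add (hG.ncard_edgesWithin_le_of_subset_supp Set.inter_subset_right)
          (hG.ncard_edgesWithin_le _)
    _ = U.ncard := Set.ncard_inter_add_ncard_sdiff_eq_ncard U c.supp
termination_by U.ncard

namespace Sym2

variable {α : Type*}

open Classical in
noncomputable def otherEnd (f : Sym2 α → α) (e : Sym2 α) : α :=
  if h : f e ∈ e then Mem.other h else f e

variable {f : Sym2 α → α} {e : Sym2 α}

theorem mk_otherEnd (h : f e ∈ e) : s(f e, otherEnd f e) = e := by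
  rw [otherEnd, dif_pos h, other_spec]

theorem otherEnd_mem (h : f e ∈ e) : otherEnd f e ∈ e := by
  rw [otherEnd, dif_pos h]
  exact other_mem h

theorem otherEnd_ne (hd : ¬e.IsDiag) (h : f e ∈ e) : otherEnd f e ≠ f e := by
  rw [otherEnd, dif_pos h]
  exact other_ne hd h

end Sym2

open Sym2 in
theorem exists_orientation_outDeg_le_one_iff {V : Type*} [Finite V] {G : SimpleGraph V} :
    (∃ o : Sym2 V → V, IsOrientation G o ∧ ∀ v, outDeg G o v ≤ 1) ↔
      ∃ τ : Sym2 V → V, Set.InjOn τ G.edgeSet ∧ ∀ e ∈ G.edgeSet, τ e ∈ e := by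
  constructor
  · rintro ⟨o, ho, hdeg⟩
    have hout (e : Sym2 V) (he : e ∈ G.edgeSet) :
        e ∈ {e | e ∈ G.edgeSet ∧ otherEnd o e ∈ e ∧ o e ≠ otherEnd o e} :=
      ⟨he, otherEnd_mem (ho e he), (otherEnd_ne (G.not_isDiag_of_mem_edgeSet he) (ho e he)).symm⟩
    refine ⟨otherEnd o, fun a ha b hb hab => ?_, fun e he => otherEnd_mem (ho e he)⟩
    exact (Set.ncard_le_one (Set.toFinite _)).1 (hdeg (otherEnd o a)) a (hout a ha) b
      (hab ▸ hout b hb)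
  · rintro ⟨τ, hinj, hτ⟩
    have htail {e v} (he : e ∈ G.edgeSet) (hv : v ∈ e) (hne : otherEnd τ e ≠ v) : τ e = v := by
      rw [← mk_otherEnd (hτ e he), mem_iff] at hv
      exact (hv.resolve_right hne.symm).symm
    refine ⟨otherEnd τ, fun e he => otherEnd_mem (hτ e he), fun v => ?_⟩
    refine (Set.ncard_le_one (Set.toFinite _)).2 fun a ⟨ha, hva, hna⟩ b ⟨hb, hvb, hnb⟩ =>
      hinj ha hb ?_
    rw [htail ha hva hna, htail hb hvb hnb]

theorem isPseudoforest_of_injOn_mem {V : Type*} [Finite V] {G : SimpleGraph V} {τ : Sym2 V → V}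
    (hinj : Set.InjOn τ G.edgeSet) (hτ : ∀ e ∈ G.edgeSet, τ e ∈ e) : IsPseudoforest G :=
  fun _ => Set.ncard_le_ncard_of_injOn τ (fun e he => he.2 _ (hτ e he.1))
    (hinj.mono fun _ he => he.1)

theorem pseudoforest_iff_orientation_outdegree_le_one
    (V : Type) [Fintype V] (G : SimpleGraph V) :
    IsPseudoforest G ↔
      ∃ o : Sym2 V → V, IsOrientation G o ∧ ∀ v : V, outDeg G o v ≤ 1 := by
  rw [exists_orientation_outDeg_le_one_iff]
  exact ⟨fun hG => exists_injOn_mem_of_ncard_edgesWithin_le hG.ncard_edgesWithin_le,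
    fun ⟨_, hinj, hτ⟩ => isPseudoforest_of_injOn_mem hinj hτ⟩
end

section
/- Let k be a positive integer. A finite simple graph G admits a partition of its edge set into k parts each spanning a pseudoforest if and only if G admits an orientation of its edges in which every vertexter has outdegree at most k. -/
/-!
An orientation is the same as a choice of a tail for every edge, and the outdegree of `v` counts
the edges with tail `v`. A finite graph is a pseudoforest exactly when its edges can be given
pairwise distinct tails: by Hall's theorem this needs every set `s` of edges of a component `C` to
have at least `|s|` endpoints, and since `|E(C)| ≤ |V(C)|` this follows by sending each vertex of
`C` that is not an endpoint of `s` to the first edge of a shortest path towards those endpoints.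

So `k` pseudoforests covering `G` give tails with at most `k` edges per vertex; conversely,
numbering the at most `k` out-edges of each vertex by `Fin k` splits the edges into `k` classes
with pairwise distinct tails, hence into `k` pseudoforests.
-/

open SimpleGraph

variable {V : Type*}

section Components

variable {H : SimpleGraph V} {c : H.ConnectedComponent}

lemma mem_compEdges {e : Sym2 V} {v : V} (he : e ∈ H.edgeSet) (hv : v ∈ e)
    (hvc : v ∈ c.supp) : e ∈ compEdges H c := by
  refine ⟨he, fun u hu => ?_⟩
  induction e using Sym2.ind with
  | h a b =>
    have hab : H.connectedComponentMk a = H.connectedComponentMk b :=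
      ConnectedComponent.connectedComponentMk_eq_of_adj he
    rw [Sym2.mem_iff] at hu hv
    rw [ConnectedComponent.mem_supp_iff] at hvc ⊢
    rcases hu with rfl | rfl <;> rcases hv with rfl | rfl <;> simp_all

lemma exists_injOn_incident_edge {A : Set V} (hAc : A ⊆ c.supp) (hA : A.Nonempty) :
    ∃ f : V → Sym2 V, Set.InjOn f (c.supp \ A) ∧
      ∀ v ∈ c.supp \ A, f v ∈ H.edgeSet ∧ v ∈ f v := by
  let D : V → ℕ := fun x => sInf (H.dist x '' A)
  have step : ∀ v ∈ c.supp \ A, ∃ w, H.Adj v w ∧ D w < D v := by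
    rintro v ⟨hv, hvA⟩
    obtain ⟨a, ha, hDv⟩ := Nat.sInf_mem (hA.image (H.dist v))
    obtain ⟨p, hp⟩ :=
      (ConnectedComponent.exact (hv.trans (hAc ha).symm)).exists_walk_length_eq_dist
    cases p with
    | nil => exact absurd ha hvA
    | @cons _ u _ hadj q =>
      refine ⟨u, hadj, ?_⟩
      have hDu : D u ≤ H.dist u a := Nat.sInf_le ⟨a, ha, rfl⟩
      have hDv' : D v = H.dist v a := hDv.symm
      have := dist_le q
      simp only [Walk.length_cons] at hp
      omega
  choose! w hw_adj hw_lt using step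
  refine ⟨fun v => s(v, w v), fun v₁ h₁ v₂ h₂ h => ?_,
    fun v hv => ⟨hw_adj v hv, Sym2.mem_mk_left _ _⟩⟩
  rcases Sym2.eq_iff.mp h with ⟨rfl, -⟩ | ⟨h₁₂, h₂₁⟩
  · rfl
  · have h₁' := hw_lt v₁ h₁
    have h₂' := hw_lt v₂ h₂
    rw [h₂₁] at h₁'
    rw [← h₁₂] at h₂'
    omega

lemma ncard_le_ncard_endpoints_of_subset_compEdges [Finite V]
    (hc : (compEdges H c).ncard ≤ c.supp.ncard) {s : Set (Sym2 V)} (hs : s ⊆ compEdges H c) :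
    s.ncard ≤ {v | ∃ e ∈ s, v ∈ e}.ncard := by
  rcases s.eq_empty_or_nonempty with rfl | ⟨e, he⟩
  · simp
  set A := {v | ∃ e ∈ s, v ∈ e}
  have hAc : A ⊆ c.supp := fun v ⟨e, he, hv⟩ => (hs he).2 v hv
  obtain ⟨f, hf_inj, hf⟩ :=
    exists_injOn_incident_edge hAc ⟨e.out.1, e, he, Sym2.out_fst_mem e⟩
  have hmaps : ∀ v ∈ c.supp \ A, f v ∈ compEdges H c \ s := fun v hv =>
    ⟨mem_compEdges (hf v hv).1 (hf v hv).2 hv.1, fun hfv => hv.2 ⟨f v, hfv, (hf v hv).2⟩⟩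
  have := Set.ncard_le_ncard_of_injOn f hmaps hf_inj
  rw [Set.ncard_sdiff hAc, Set.ncard_sdiff hs] at this
  have := Set.ncard_le_ncard hs
  have := Set.ncard_le_ncard hAc
  omega

lemma exists_injOn_compEdges [Finite V] (hc : (compEdges H c).ncard ≤ c.supp.ncard) :
    ∃ t : Sym2 V → V, (∀ e ∈ compEdges H c, t e ∈ e) ∧ Set.InjOn t (compEdges H c) := by
  classical
  have := Fintype.ofFinite V
  obtain ⟨f, hf_inj, hf⟩ := (Fintype.all_card_le_filter_rel_iff_exists_injective
    fun (e : compEdges H c) v => v ∈ (e : Sym2 V)).mp fun s => by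
      have := ncard_le_ncard_endpoints_of_subset_compEdges hc
        (s := Subtype.val '' (s : Set (compEdges H c))) (by simp)
      rw [Set.ncard_image_of_injective _ Subtype.val_injective, Set.ncard_coe_finset] at this
      refine this.trans_eq ?_
      rw [← Set.ncard_coe_finset, Finset.coe_filter]
      congr 1
      ext v
      simp
  refine ⟨fun e => if h : e ∈ compEdges H c then f ⟨e, h⟩ else e.out.1, fun e he => ?_,
    fun e₁ he₁ e₂ he₂ h => ?_⟩
  · simpa [he] using hf ⟨e, he⟩
  · exact congrArg Subtype.val (hf_inj (by simpa [he₁, he₂] using h))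

end Components

lemma IsPseudoforest.exists_injOn [Finite V] {H : SimpleGraph V} (hH : IsPseudoforest H) :
    ∃ t : Sym2 V → V, IsOrientation H t ∧ Set.InjOn t H.edgeSet := by
  choose t ht_mem ht_inj using fun c => exists_injOn_compEdges (hH c)
  let comp (e : Sym2 V) : H.ConnectedComponent := H.connectedComponentMk e.out.1
  have he_comp : ∀ e ∈ H.edgeSet, e ∈ compEdges H (comp e) := fun e he =>
    mem_compEdges he (Sym2.out_fst_mem e) rfl
  refine ⟨fun e => t (comp e) e, fun e he => ht_mem _ e (he_comp e he),
    fun e₁ he₁ e₂ he₂ h => ?_⟩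
  have hcomp : comp e₁ = comp e₂ := by
    have h₁ := (he_comp e₁ he₁).2 _ (ht_mem _ e₁ (he_comp e₁ he₁))
    have h₂ := (he_comp e₂ he₂).2 _ (ht_mem _ e₂ (he_comp e₂ he₂))
    rw [ConnectedComponent.mem_supp_iff] at h₁ h₂
    simp only at h
    rw [← h₁, ← h₂, h]
  simp only [hcomp] at h
  exact ht_inj _ (hcomp ▸ he_comp e₁ he₁) (he_comp e₂ he₂) h

lemma isPseudoforest_of_injOn [Finite V] {H : SimpleGraph V} {t : Sym2 V → V}
    (ht : IsOrientation H t) (ht_inj : Set.InjOn t H.edgeSet) : IsPseudoforest H := fun c =>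
  Set.ncard_le_ncard_of_injOn t (fun e he => he.2 _ (ht e he.1)) (ht_inj.mono fun _ he => he.1)

section Orientation

variable {G : SimpleGraph V} {o : Sym2 V → V}

open Classical in
noncomputable def reverseOrientation (o : Sym2 V → V) (e : Sym2 V) : V :=
  if h : o e ∈ e then Sym2.Mem.other h else o e

lemma IsOrientation.reverse (ho : IsOrientation G o) : IsOrientation G (reverseOrientation o) :=
  fun e he => by simpa [reverseOrientation, ho e he] using Sym2.other_mem (ho e he)

lemma IsOrientation.reverse_reverse (ho : IsOrientation G o) {e : Sym2 V} (he : e ∈ G.edgeSet) :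
    reverseOrientation (reverseOrientation o) e = o e := by
  have key : ∀ (x : V) (hx : x ∈ e), x = Sym2.Mem.other (ho e he) →
      Sym2.Mem.other hx = o e := by
    rintro _ _ rfl
    exact Sym2.other_invol _ _
  rw [reverseOrientation, dif_pos (ho.reverse e he)]
  exact key _ _ (dif_pos (ho e he))

lemma IsOrientation.mem_and_ne_iff (ho : IsOrientation G o) {e : Sym2 V} (he : e ∈ G.edgeSet)
    (v : V) : v ∈ e ∧ o e ≠ v ↔ reverseOrientation o e = v := by
  have hne := Sym2.other_ne (G.not_isDiag_of_mem_edgeSet he) (ho e he)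
  have hmem : v ∈ e ↔ v = o e ∨ v = Sym2.Mem.other (ho e he) := by
    rw [← Sym2.mem_iff, Sym2.other_spec]
  rw [reverseOrientation, dif_pos (ho e he), hmem]
  grind

lemma IsOrientation.outDeg_reverse (ho : IsOrientation G o) (v : V) :
    outDeg G (reverseOrientation o) v = {e | e ∈ G.edgeSet ∧ o e = v}.ncard := by
  unfold outDeg
  congr 1
  ext e
  exact and_congr_right fun he => by rw [ho.reverse.mem_and_ne_iff he, ho.reverse_reverse he]

lemma IsOrientation.card_reverse_eq (ho : IsOrientation G o) (v : V) :
    Nat.card {e : G.edgeSet // reverseOrientation o e = v} = outDeg G o v := by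
  rw [Nat.card_congr (Equiv.subtypeSubtypeEquivSubtypeInter (· ∈ G.edgeSet)
    fun e => reverseOrientation o e = v), outDeg, ← Nat.card_coe_set_eq]
  congr
  ext e
  exact and_congr_right fun he => (ho.mem_and_ne_iff he v).symm

end Orientation

lemma exists_orientation_of_pseudoforest_cover [Finite V] {ι : Type*} [Fintype ι]
    {G : SimpleGraph V} (H : ι → SimpleGraph V) (hcover : G.edgeSet ⊆ ⋃ i, (H i).edgeSet)
    (hH : ∀ i, IsPseudoforest (H i)) :
    ∃ t : Sym2 V → V, IsOrientation G t ∧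
      ∀ v, {e | e ∈ G.edgeSet ∧ t e = v}.ncard ≤ Fintype.card ι := by
  classical
  choose t ht ht_inj using fun i => (hH i).exists_injOn
  let t' (e : Sym2 V) : V := if h : ∃ i, e ∈ (H i).edgeSet then t h.choose e else e.out.1
  have ht' : ∀ e ∈ G.edgeSet, ∃ i, e ∈ (H i).edgeSet ∧ t' e = t i e := fun e he => by
    have h : ∃ i, e ∈ (H i).edgeSet := Set.mem_iUnion.mp (hcover he)
    exact ⟨h.choose, h.choose_spec, dif_pos h⟩
  refine ⟨t', fun e he => ?_, fun v => ?_⟩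
  · obtain ⟨i, hi, h⟩ := ht' e he
    exact h ▸ ht i e hi
  have hsub :
      {e | e ∈ G.edgeSet ∧ t' e = v} ⊆ ⋃ i, {e | e ∈ (H i).edgeSet ∧ t i e = v} :=
    fun e ⟨he, hv⟩ => by
      obtain ⟨i, hi, h⟩ := ht' e he
      exact Set.mem_iUnion.mpr ⟨i, hi, h ▸ hv⟩
  calc {e | e ∈ G.edgeSet ∧ t' e = v}.ncard
      ≤ (⋃ i, {e | e ∈ (H i).edgeSet ∧ t i e = v}).ncard := Set.ncard_le_ncard hsub
    _ ≤ ∑ i, {e | e ∈ (H i).edgeSet ∧ t i e = v}.ncard := Set.ncard_iUnion_le_of_fintype _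
    _ ≤ ∑ _ : ι, 1 := Finset.sum_le_sum fun i _ => (Set.ncard_le_one_iff).mpr
        fun ⟨he₁, h₁⟩ ⟨he₂, h₂⟩ => ht_inj i he₁ he₂ (h₁.trans h₂.symm)
    _ = Fintype.card ι := by simp

lemma exists_fin_injective_prodMk_of_card_fiber_le {α β : Type*} [Finite α] (f : α → β)
    {k : ℕ} (h : ∀ b, Nat.card {a // f a = b} ≤ k) :
    ∃ c : α → Fin k, Function.Injective fun a => (f a, c a) := by
  let emb (b : β) : {a // f a = b} ↪ Fin k :=
    (Finite.equivFin _).toEmbedding.trans (Fin.castLEEmb (h b))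
  have hinj : Function.Injective fun a => (⟨f a, emb (f a) ⟨a, rfl⟩⟩ : Σ _ : β, Fin k) :=
    (Function.injective_id.sigma_map (β₂ := fun _ => Fin k) (f₂ := fun b => emb b)
      fun b => (emb b).injective).comp (Equiv.sigmaFiberEquiv f).symm.injective
  exact ⟨fun a => emb (f a) ⟨a, rfl⟩, fun x y hxy =>
    hinj (Sigma.ext (congrArg Prod.fst hxy) (heq_of_eq (congrArg Prod.snd hxy)))⟩

lemma isPseudoforestDecomp_of_injective [Finite V] {G : SimpleGraph V} {t : Sym2 V → V}
    (ht : IsOrientation G t) {m : ℕ} (c : G.edgeSet → Fin m)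
    (hc : Function.Injective fun x : G.edgeSet => (t x, c x)) :
    IsPseudoforestDecomp G m fun i => Subtype.val '' (c ⁻¹' {i}) := by
  refine ⟨fun i => Subtype.coe_image_subset _ _, fun i j hij => ?_, ?_, fun i => ?_⟩
  · exact (Set.disjoint_image_iff Subtype.val_injective).mpr
      ((Set.disjoint_singleton.mpr hij).preimage c)
  · ext e
    simp
  · have hsub :=
      (edgeSet_fromEdgeSet (Subtype.val '' (c ⁻¹' {i}))).trans_subset Set.sdiff_subset
    refine isPseudoforest_of_injOn (t := t) (fun e he => ?_) ?_
    · obtain ⟨x, -, rfl⟩ := hsub he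
      exact ht x x.2
    · intro e₁ he₁ e₂ he₂ h
      obtain ⟨x, hx, rfl⟩ := hsub he₁
      obtain ⟨y, hy, rfl⟩ := hsub he₂
      exact congrArg Subtype.val (hc (Prod.ext h (hx.trans hy.symm)))

theorem pseudoforest_decomposition_iff_orientation_general
    (k : ℕ) (V : Type) [Fintype V] (G : SimpleGraph V) :
    (∃ P : Fin k → Set (Sym2 V), IsPseudoforestDecomp G k P) ↔
      ∃ o : Sym2 V → V, IsOrientation G o ∧ ∀ v : V, outDeg G o v ≤ k := by
  constructor
  · rintro ⟨P, -, -, hunion, hpf⟩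
    have hcover : G.edgeSet ⊆ ⋃ i, (fromEdgeSet (P i)).edgeSet := fun e he => by
      obtain ⟨i, hi⟩ := Set.mem_iUnion.mp (hunion ▸ he)
      exact Set.mem_iUnion.mpr ⟨i, by simpa [hi] using G.not_isDiag_of_mem_edgeSet he⟩
    obtain ⟨t, ht, hdeg⟩ := exists_orientation_of_pseudoforest_cover _ hcover hpf
    refine ⟨reverseOrientation t, ht.reverse, fun v => ?_⟩
    simpa [ht.outDeg_reverse] using hdeg v
  · rintro ⟨o, ho, hdeg⟩
    obtain ⟨c, hc⟩ := exists_fin_injective_prodMk_of_card_fiber_le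
      (fun e : G.edgeSet => reverseOrientation o e)
      fun v => (ho.card_reverse_eq v).trans_le (hdeg v)
    exact ⟨_, isPseudoforestDecomp_of_injective ho.reverse c hc⟩

theorem pseudoforest_decomposition_iff_orientation
    (k : ℕ) (hk : 0 < k) (V : Type) [Fintype V] (G : SimpleGraph V) :
    (∃ P : Fin k → Set (Sym2 V), IsPseudoforestDecomp G k P) ↔
      ∃ o : Sym2 V → V, IsOrientation G o ∧ ∀ v : V, outDeg G o v ≤ k :=
  pseudoforest_decomposition_iff_orientation_general k V G
end

section
/- Fix positive integers k and d and let ℓ = ⌊(d-1)/(k+1)⌋. Call a finite simple graph G a counterexample if mad(G) ≤ 2(k + d/(d+k+1)) but the edge set of G admits no partition into k+1 parts each spanning a pseudoforest in which one part F is acyclic, every component of F has at most d edges and diameter at most 2ℓ+2 (at most 2ℓ+1 if d ≡ 1 mod (k+1)), and for every natural number z every component of F with at least d − z(k−1) + 1 edges has diameter at most 2z. If G is a counterexample whose number of vertices is minimum among all counterexamples, then G admits an orientation of its edges in which every vertex has outdegree at least k and at most k+1. -/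
open SimpleGraph

/-- The connected component `c` of `H` has diameter at most `b`. -/
def compDiamLE {V : Type*} (H : SimpleGraph V) (c : H.ConnectedComponent) (b : ℕ) : Prop :=
  ∀ u ∈ c.supp, ∀ v ∈ c.supp, H.dist u v ≤ b


/-- `mad(G) ≤ c`: every nonempty subgraph has average degree at most `c`. -/
def MadLE {V : Type*} (G : SimpleGraph V) (c : ℝ) : Prop :=
  ∀ H : G.Subgraph, H.verts.Nonempty →
    (2 * H.edgeSet.ncard : ℝ) / H.verts.ncard ≤ c

/-- `G` has a decomposition into `k+1` pseudoforests, one of which is an acyclic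
part all of whose components have at most `d` edges, diameter at most `2ℓ+2`
(at most `2ℓ+1` if `d ≡ 1 (mod k+1)`), and components with at least
`d - z(k-1) + 1` edges have diameter at most `2z`, where `ℓ = ⌊(d-1)/(k+1)⌋`. -/
def GoodDecomp {V : Type*} (k d : ℕ) (G : SimpleGraph V) : Prop :=
  ∃ P : Fin (k + 1) → Set (Sym2 V), IsPseudoforestDecomp G (k + 1) P ∧
    ∃ i : Fin (k + 1),
      (SimpleGraph.fromEdgeSet (P i)).IsAcyclic ∧
      ∀ K : (SimpleGraph.fromEdgeSet (P i)).ConnectedComponent,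
        (compEdges (SimpleGraph.fromEdgeSet (P i)) K).ncard ≤ d ∧
        compDiamLE (SimpleGraph.fromEdgeSet (P i)) K (2 * ((d - 1) / (k + 1)) + 2) ∧
        (d ≡ 1 [MOD k + 1] →
          compDiamLE (SimpleGraph.fromEdgeSet (P i)) K (2 * ((d - 1) / (k + 1)) + 1)) ∧
        ∀ z : ℕ,
          (d : ℤ) - z * ((k : ℤ) - 1) + 1 ≤
              ((compEdges (SimpleGraph.fromEdgeSet (P i)) K).ncard : ℤ) →
            compDiamLE (SimpleGraph.fromEdgeSet (P i)) K (2 * z)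

/-- `G` is a counterexample to the main theorem for the parameters `k`, `d`. -/
def IsCounterexample (k d : ℕ) {n : ℕ} (G : SimpleGraph (Fin n)) : Prop :=
  MadLE G (2 * ((k : ℝ) + d / (d + k + 1))) ∧ ¬ GoodDecomp k d G

section MapLemmas

variable {V W : Type*} (f : V ↪ W) (H : SimpleGraph V)

lemma edgeSet_map' : (H.map f).edgeSet = Sym2.map f '' H.edgeSet := by
  ext e
  induction e with
  | _ x y =>
    simp only [mem_edgeSet, map_adj, Set.mem_image]
    constructor
    · rintro ⟨a, b, hab, rfl, rfl⟩
      exact ⟨s(a,b), hab, rfl⟩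
    · rintro ⟨e', he', hme⟩
      induction e' with
      | _ a b =>
        rw [Sym2.map_pair_eq, Sym2.eq_iff] at hme
        rcases hme with ⟨rfl, rfl⟩ | ⟨rfl, rfl⟩
        · exact ⟨a, b, he', rfl, rfl⟩
        · exact ⟨b, a, he'.symm, rfl, rfl⟩

lemma fromEdgeSet_image (E : Set (Sym2 V)) :
    SimpleGraph.fromEdgeSet (Sym2.map f '' E) = (SimpleGraph.fromEdgeSet E).map f := by
  ext x y
  simp only [fromEdgeSet_adj, Set.mem_image, map_adj]
  constructor
  · rintro ⟨⟨e', he', hme⟩, hxy⟩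
    induction e' with
    | _ a b =>
      rw [Sym2.map_pair_eq, Sym2.eq_iff] at hme
      rcases hme with ⟨rfl, rfl⟩ | ⟨rfl, rfl⟩
      · exact ⟨a, b, ⟨he', fun h => hxy (by rw [h])⟩, rfl, rfl⟩
      · exact ⟨b, a, ⟨(Sym2.eq_swap ▸ he' : s(b,a) ∈ E), fun h => hxy (by rw [h])⟩, rfl, rfl⟩
  · rintro ⟨a, b, ⟨hab, hne⟩, rfl, rfl⟩
    exact ⟨⟨s(a,b), hab, rfl⟩, fun h => hne (f.injective h)⟩

/-- The homomorphism from `H` to `H.map f`. -/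
def homMap : H →g H.map f := ⟨f, fun h => ⟨f.injective.ne h.ne, _, _, h, rfl, rfl⟩⟩

lemma walk_pullback {u w : W} (p : (H.map f).Walk u w) :
    ∀ (x y : V) (hx : f x = u) (hy : f y = w),
    ∃ q : H.Walk x y, q.map (homMap f H) = p.copy hx.symm hy.symm := by
  induction p with
  | nil =>
    intro x y hx hy
    subst hx
    have hxy : y = x := f.injective hy
    subst hxy
    exact ⟨Walk.nil, by simp; rfl⟩
  | @cons u v w h p ih =>
    intro x y hx hy
    subst hx
    obtain ⟨a, b, hab, ha, hb⟩ := (map_adj f H _ _).mp h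
    have hax : a = x := f.injective ha
    subst hax
    subst hb
    obtain ⟨q, hq⟩ := ih b y rfl hy
    refine ⟨Walk.cons hab q, ?_⟩
    rw [Walk.copy_cons]
    simp only [Walk.map_cons, hq]
    rfl

end MapLemmas


section MapLemmas2

variable {V W : Type*} (f : V ↪ W) (H : SimpleGraph V)


variable {f H}

lemma reachable_isolated {H : SimpleGraph V} {u v : V} (h : H.Reachable u v)
    (hv : ∀ w, ¬ H.Adj v w) : u = v := by
  obtain ⟨p⟩ := h.symm
  cases p with
  | nil => rfl
  | cons h' p => exact absurd h' (hv _)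

lemma not_adj_map_of_not_range {w : W} (hw : w ∉ Set.range f) (z : W) :
    ¬ (H.map f).Adj w z := by
  rintro ⟨-, a, b, hab, rfl, rfl⟩
  exact hw ⟨a, rfl⟩

lemma supp_isolated {w : W} (hw : w ∉ Set.range f) :
    ((H.map f).connectedComponentMk w).supp = {w} := by
  ext u
  simp only [ConnectedComponent.mem_supp_iff, ConnectedComponent.eq, Set.mem_singleton_iff]
  constructor
  · intro h
    exact reachable_isolated h (not_adj_map_of_not_range hw)
  · rintro rfl; rfl

lemma reachable_map_iff {x y : V} :
    (H.map f).Reachable (f x) (f y) ↔ H.Reachable x y := by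
  constructor
  · rintro ⟨p⟩
    obtain ⟨q, -⟩ := walk_pullback f H p x y rfl rfl
    exact ⟨q⟩
  · exact fun h => h.map (homMap f H)

lemma supp_map_eq (a : V) :
    ((H.map f).connectedComponentMk (f a)).supp
      = f '' (H.connectedComponentMk a).supp := by
  ext u
  simp only [ConnectedComponent.mem_supp_iff, ConnectedComponent.eq, Set.mem_image]
  constructor
  · intro h
    have hu : u ∈ Set.range f := by
      by_contra hu
      exact absurd (reachable_isolated h.symm (not_adj_map_of_not_range hu)).symm
        (by rintro rfl; exact hu ⟨a, rfl⟩)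
    obtain ⟨x, rfl⟩ := hu
    exact ⟨x, reachable_map_iff.mp h, rfl⟩
  · rintro ⟨x, hx, rfl⟩
    exact reachable_map_iff.mpr hx

lemma compEdges_map_eq (a : V) :
    compEdges (H.map f) ((H.map f).connectedComponentMk (f a))
      = Sym2.map f '' compEdges H (H.connectedComponentMk a) := by
  ext e
  simp only [compEdges, Set.mem_setOf_eq, Set.mem_image]
  constructor
  · rintro ⟨he, hsupp⟩
    rw [edgeSet_map'] at he
    obtain ⟨e₀, he₀, rfl⟩ := he
    refine ⟨e₀, ⟨he₀, fun v hv => ?_⟩, rfl⟩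
    have : f v ∈ ((H.map f).connectedComponentMk (f a)).supp :=
      hsupp (f v) (Sym2.mem_map.mpr ⟨v, hv, rfl⟩)
    rw [supp_map_eq] at this
    obtain ⟨x, hx, hfx⟩ := this
    rwa [f.injective hfx] at hx
  · rintro ⟨e₀, ⟨he₀, hsupp⟩, rfl⟩
    refine ⟨by rw [edgeSet_map']; exact ⟨e₀, he₀, rfl⟩, fun v hv => ?_⟩
    rw [Sym2.mem_map] at hv
    obtain ⟨x, hx, rfl⟩ := hv
    rw [supp_map_eq]
    exact ⟨x, hsupp x hx, rfl⟩

lemma compEdges_empty_of_singleton {H : SimpleGraph W} {c : H.ConnectedComponent} {w : W}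
    (h : c.supp = {w}) : compEdges H c = ∅ := by
  ext e
  simp only [compEdges, Set.mem_setOf_eq, Set.mem_empty_iff_false, iff_false, not_and]
  intro he hsupp
  have hd := H.not_isDiag_of_mem_edgeSet he
  induction e with
  | _ x y =>
    have hx := hsupp x (Sym2.mem_mk_left x y)
    have hy := hsupp y (Sym2.mem_mk_right x y)
    rw [h, Set.mem_singleton_iff] at hx hy
    exact hd (by rw [hx, hy]; exact Sym2.isDiag_iff_proj_eq.mpr rfl)

lemma dist_map_le {x y : V} (h : H.Reachable x y) :
    (H.map f).dist (f x) (f y) ≤ H.dist x y := by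
  obtain ⟨p, hp⟩ := h.exists_walk_length_eq_dist
  calc (H.map f).dist (f x) (f y) ≤ (p.map (homMap f H)).length := dist_le _
    _ = p.length := Walk.length_map _ _
    _ = H.dist x y := hp

lemma pseudoforest_map [Fintype W] (hH : IsPseudoforest H) : IsPseudoforest (H.map f) := by
  intro K
  induction K using SimpleGraph.ConnectedComponent.ind with
  | _ w =>
  by_cases hw : w ∈ Set.range f
  · obtain ⟨a, rfl⟩ := hw
    rw [compEdges_map_eq, supp_map_eq,
      Set.ncard_image_of_injective _ (Sym2.map.injective f.injective),
      Set.ncard_image_of_injective _ f.injective]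
    exact hH _
  · rw [compEdges_empty_of_singleton (supp_isolated hw)]
    simp [Set.ncard_empty]

lemma acyclic_map (hH : H.IsAcyclic) : (H.map f).IsAcyclic := by
  intro v p hp
  have hv : v ∈ Set.range f := by
    cases p with
    | nil => exact absurd rfl hp.ne_nil
    | cons h' p =>
      obtain ⟨-, a, b, -, ha, -⟩ := h'
      exact ⟨a, ha⟩
  obtain ⟨a, rfl⟩ := hv
  obtain ⟨q, hq⟩ := walk_pullback f H p a a rfl rfl
  rw [Walk.copy_rfl_rfl] at hq
  have : (q.map (homMap f H)).IsCycle := hq ▸ hp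
  exact hH q ((Walk.map_isCycle_iff_of_injective f.injective).mp this)

end MapLemmas2


lemma reachable_isolated' {V : Type*} {H : SimpleGraph V} {u v : V} (h : H.Reachable u v)
    (hv : ∀ w, ¬ H.Adj v w) : u = v := by
  obtain ⟨p⟩ := h.symm
  cases p with
  | nil => rfl
  | cons h' p => exact absurd h' (hv _)

lemma adj_of_mem_edge {V : Type*} {H : SimpleGraph V} {e : Sym2 V} {v : V}
    (he : e ∈ H.edgeSet) (hv : v ∈ e) : ∃ w, H.Adj v w ∧ e = s(v, w) := by
  obtain ⟨w, rfl⟩ := Sym2.mem_iff_exists.mp hv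
  exact ⟨w, H.mem_edgeSet.mp he, rfl⟩

lemma exists_injOn_of_ncard_le {α β : Type*} [Nonempty β] {s : Set α} {t : Set β}
    (hs : s.Finite) (ht : t.Finite) (h : s.ncard ≤ t.ncard) :
    ∃ g : α → β, Set.InjOn g s ∧ Set.MapsTo g s t := by
  classical
  haveI := hs.fintype
  haveI := ht.fintype
  have hcard : Fintype.card s ≤ Fintype.card t := by
    rwa [← Nat.card_coe_set_eq, ← Nat.card_coe_set_eq,
      Nat.card_eq_fintype_card, Nat.card_eq_fintype_card] at h
  obtain ⟨emb⟩ := Function.Embedding.nonempty_of_card_le hcard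
  refine ⟨fun a => if h : a ∈ s then (emb ⟨a, h⟩ : β) else Classical.arbitrary β, ?_, ?_⟩
  · intro a ha b hb hab
    simp only [dif_pos ha, dif_pos hb] at hab
    have := emb.injective (Subtype.val_injective hab)
    exact Subtype.mk_eq_mk.mp this
  · intro a ha
    simp only [dif_pos ha]
    exact (emb ⟨a, ha⟩).property

lemma addTails {V : Type*} [Fintype V] (E A : Set (Sym2 V)) (τ : Sym2 V → V)
    (hPF : IsPseudoforest (SimpleGraph.fromEdgeSet E))
    (hmem : ∀ e ∈ A, τ e ∈ e)
    (hinj : A.InjOn τ)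
    (hiso : ∀ e ∈ A, ∀ e' ∈ E, τ e ∉ e') :
    IsPseudoforest (SimpleGraph.fromEdgeSet (E ∪ A)) := by
  classical
  set Hold := SimpleGraph.fromEdgeSet E with hHold
  set N := SimpleGraph.fromEdgeSet (E ∪ A) with hN
  intro c
  have hmono : Hold ≤ N := SimpleGraph.fromEdgeSet_mono Set.subset_union_left
  haveI : Nonempty V := by
    obtain ⟨w, -⟩ := c.exists_rep
    exact ⟨w⟩
  have hchoice : ∀ c' : Hold.ConnectedComponent, ∃ g : Sym2 V → V,
      Set.InjOn g (compEdges Hold c') ∧ Set.MapsTo g (compEdges Hold c') c'.supp :=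
    fun c' => exists_injOn_of_ncard_le (Set.toFinite _) (Set.toFinite _) (hPF c')
  choose g hginj hgmap using hchoice
  -- the canonical old component of an edge
  set oc : Sym2 V → Hold.ConnectedComponent :=
    fun e => Hold.connectedComponentMk e.out.1 with hocdef
  have hoc : ∀ e ∈ Hold.edgeSet, e ∈ compEdges Hold (oc e) := by
    intro e he
    refine ⟨he, fun v hv => ?_⟩
    rw [SimpleGraph.ConnectedComponent.mem_supp_iff, SimpleGraph.ConnectedComponent.eq]
    obtain ⟨w, hadj, hevw⟩ := adj_of_mem_edge he hv
    subst hevw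
    have h1 : (s(v,w) : Sym2 V).out.1 ∈ (s(v,w) : Sym2 V) := Sym2.out_fst_mem _
    rw [Sym2.mem_iff] at h1
    rcases h1 with h1 | h1
    · rw [h1]
    · rw [h1]
      exact hadj.reachable
  -- isolated tails
  have htiso : ∀ e ∈ A, ∀ w, ¬ Hold.Adj (τ e) w := by
    intro e he w hadj
    rw [hHold, SimpleGraph.fromEdgeSet_adj] at hadj
    exact hiso e he _ hadj.1 (Sym2.mem_mk_left _ _)
  -- supports of old components of edges in c are inside supp c
  have hsupp_sub : ∀ e ∈ compEdges N c, e ∈ Hold.edgeSet → (oc e).supp ⊆ c.supp := by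
    intro e hec hee u hu
    rw [SimpleGraph.ConnectedComponent.mem_supp_iff] at hu ⊢
    rw [SimpleGraph.ConnectedComponent.eq] at hu
    have h1 : e.out.1 ∈ c.supp := hec.2 _ (Sym2.out_fst_mem e)
    rw [SimpleGraph.ConnectedComponent.mem_supp_iff] at h1
    rw [← h1, SimpleGraph.ConnectedComponent.eq]
    exact hu.mono hmono
  -- the global injection
  set F : Sym2 V → V := fun e => if h : e ∈ Hold.edgeSet then g (oc e) e else τ e with hF
  -- old edges in c are in their old component's compEdges
  have hold_mem : ∀ e ∈ compEdges N c, e ∈ Hold.edgeSet → e ∈ compEdges Hold (oc e) :=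
    fun e _ hee => hoc e hee
  -- new edges in c are in A
  have hnew_mem : ∀ e ∈ compEdges N c, e ∉ Hold.edgeSet → e ∈ A := by
    intro e hec hee
    have heN : e ∈ N.edgeSet := hec.1
    rw [hN, SimpleGraph.edgeSet_fromEdgeSet] at heN
    rw [hHold, SimpleGraph.edgeSet_fromEdgeSet] at hee
    rcases heN.1 with h | h
    · exact absurd ⟨h, heN.2⟩ hee
    · exact h
  have hmaps : Set.MapsTo F (compEdges N c) c.supp := by
    intro e hec
    by_cases hee : e ∈ Hold.edgeSet
    · rw [hF]; simp only [dif_pos hee]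
      exact hsupp_sub e hec hee (hgmap (oc e) (hold_mem e hec hee))
    · rw [hF]; simp only [dif_neg hee]
      exact hec.2 _ (hmem e (hnew_mem e hec hee))
  have hinjF : Set.InjOn F (compEdges N c) := by
    intro e₁ h₁ e₂ h₂ heq
    by_cases he₁ : e₁ ∈ Hold.edgeSet <;> by_cases he₂ : e₂ ∈ Hold.edgeSet
    · simp only [hF, dif_pos he₁, dif_pos he₂] at heq
      by_cases hcc : oc e₁ = oc e₂
      · rw [hcc] at heq
        exact hginj (oc e₂) (hcc ▸ hold_mem e₁ h₁ he₁) (hold_mem e₂ h₂ he₂) heq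
      · exfalso
        have m₁ := hgmap (oc e₁) (hold_mem e₁ h₁ he₁)
        have m₂ := hgmap (oc e₂) (hold_mem e₂ h₂ he₂)
        rw [heq] at m₁
        exact Set.disjoint_left.mp
          (SimpleGraph.pairwise_disjoint_supp_connectedComponent _ hcc) m₁ m₂
    · -- e₁ old, e₂ new: value of e₁ lies in supp (oc e₁); show τ e₂ not there
      exfalso
      have hA₂ := hnew_mem e₂ h₂ he₂
      simp only [hF, dif_pos he₁, dif_neg he₂] at heq
      have m₁ := hgmap (oc e₁) (hold_mem e₁ h₁ he₁)
      rw [heq] at m₁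
      rw [SimpleGraph.ConnectedComponent.mem_supp_iff] at m₁
      have : τ e₂ = e₁.out.1 := by
        have hre : Hold.Reachable e₁.out.1 (τ e₂) := by
          rw [← SimpleGraph.ConnectedComponent.eq, m₁]
        exact (reachable_isolated' hre (htiso e₂ hA₂)).symm
      have he₁E : e₁ ∈ E := by
        rw [hHold, SimpleGraph.edgeSet_fromEdgeSet] at he₁
        exact he₁.1
      exact hiso e₂ hA₂ e₁ he₁E (this ▸ Sym2.out_fst_mem e₁)
    · exfalso
      have hA₁ := hnew_mem e₁ h₁ he₁
      simp only [hF, dif_neg he₁, dif_pos he₂] at heq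
      have m₂ := hgmap (oc e₂) (hold_mem e₂ h₂ he₂)
      rw [← heq] at m₂
      rw [SimpleGraph.ConnectedComponent.mem_supp_iff] at m₂
      have : τ e₁ = e₂.out.1 := by
        have hre : Hold.Reachable e₂.out.1 (τ e₁) := by
          rw [← SimpleGraph.ConnectedComponent.eq, m₂]
        exact (reachable_isolated' hre (htiso e₁ hA₁)).symm
      have he₂E : e₂ ∈ E := by
        rw [hHold, SimpleGraph.edgeSet_fromEdgeSet] at he₂
        exact he₂.1
      exact hiso e₁ hA₁ e₂ he₂E (this ▸ Sym2.out_fst_mem e₂)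
    · simp only [hF, dif_neg he₁, dif_neg he₂] at heq
      exact hinj (hnew_mem e₁ h₁ he₁) (hnew_mem e₂ h₂ he₂) heq
  exact Set.ncard_le_ncard_of_injOn F (fun a ha => hmaps ha) hinjF (Set.toFinite _)


lemma madLE_comap {V W : Type*} (G : SimpleGraph W) (f : V ↪ W) {c : ℝ}
    (h : MadLE G c) : MadLE (G.comap f) c := by
  intro H' hne
  let H : G.Subgraph := {
    verts := f '' H'.verts
    Adj := fun x y => ∃ a b, H'.Adj a b ∧ f a = x ∧ f b = y
    adj_sub := by rintro x y ⟨a, b, hab, rfl, rfl⟩; exact H'.adj_sub hab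
    edge_vert := by rintro x y ⟨a, b, hab, rfl, rfl⟩; exact ⟨a, H'.edge_vert hab, rfl⟩
    symm := ⟨by rintro x y ⟨a, b, hab, rfl, rfl⟩; exact ⟨b, a, hab.symm, rfl, rfl⟩⟩ }
  have hv : H.verts.ncard = H'.verts.ncard :=
    Set.ncard_image_of_injective _ f.injective
  have he : H.edgeSet = Sym2.map f '' H'.edgeSet := by
    ext e
    induction e with
    | _ x y =>
      simp only [Subgraph.mem_edgeSet, Set.mem_image]
      constructor
      · rintro ⟨a, b, hab, rfl, rfl⟩
        exact ⟨s(a,b), Subgraph.mem_edgeSet.mpr hab, rfl⟩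
      · rintro ⟨e', he', hme⟩
        induction e' with
        | _ a b =>
          rw [Sym2.map_pair_eq, Sym2.eq_iff] at hme
          rw [Subgraph.mem_edgeSet] at he'
          rcases hme with ⟨rfl, rfl⟩ | ⟨rfl, rfl⟩
          · exact ⟨a, b, he', rfl, rfl⟩
          · exact ⟨b, a, he'.symm, rfl, rfl⟩
  have hec : H.edgeSet.ncard = H'.edgeSet.ncard := by
    rw [he, Set.ncard_image_of_injective _ (Sym2.map.injective f.injective)]
  have hne' : H.verts.Nonempty := by
    obtain ⟨a, ha⟩ := hne
    exact ⟨f a, a, ha, rfl⟩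
  have := h H hne'
  rwa [hv, hec] at this

lemma density_le {n k d : ℕ} (hk : 0 < k) (hd : 0 < d) (G : SimpleGraph (Fin n))
    (hmad : MadLE G (2 * ((k : ℝ) + d / (d + k + 1))))
    (T : Finset (Fin n)) :
    ({e ∈ G.edgeSet | ∀ v ∈ e, v ∈ T}).ncard ≤ (k + 1) * T.card := by
  classical
  rcases T.eq_empty_or_nonempty with rfl | hTne
  · convert Nat.zero_le _
    rw [Set.ncard_eq_zero (Set.toFinite _), Set.eq_empty_iff_forall_notMem]
    rintro e ⟨he, hall⟩
    exact absurd (hall e.out.1 (Sym2.out_fst_mem e)) (Finset.notMem_empty _)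
  let H : G.Subgraph := {
    verts := ↑T
    Adj := fun x y => G.Adj x y ∧ x ∈ T ∧ y ∈ T
    adj_sub := fun h => h.1
    edge_vert := fun h => h.2.1
    symm := ⟨fun x y h => ⟨h.1.symm, h.2.2, h.2.1⟩⟩ }
  have hes : H.edgeSet = {e ∈ G.edgeSet | ∀ v ∈ e, v ∈ T} := by
    ext e
    induction e with
    | _ x y =>
      simp only [Subgraph.mem_edgeSet, Set.mem_setOf_eq, mem_edgeSet, Sym2.ball]
      try tauto
  have hvs : H.verts.ncard = T.card := Set.ncard_coe_finset T
  have hmm := hmad H (by exact ⟨hTne.choose, hTne.choose_spec⟩)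
  rw [hvs, hes] at hmm
  set E := ({e ∈ G.edgeSet | ∀ v ∈ e, v ∈ T}).ncard with hEdef
  have hTpos : (0:ℝ) < T.card := by exact_mod_cast hTne.card_pos
  have hkpos : (0:ℝ) < k := by exact_mod_cast hk
  have hfrac : ((d:ℝ)) / (d + k + 1) < 1 := by
    rw [div_lt_one (by positivity)]
    linarith
  have h1 : (2 * E : ℝ) ≤ 2 * ((k : ℝ) + d / (d + k + 1)) * T.card := by
    rw [div_le_iff₀ hTpos] at hmm
    exact hmm
  have h2 : (E : ℝ) < (k + 1) * T.card := by nlinarith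
  have h3 : (E : ℝ) < ((k+1) * T.card : ℕ) := by push_cast; linarith
  exact_mod_cast h3.le


section Lift

lemma lift_good {n m k d : ℕ} (G : SimpleGraph (Fin n)) (S : Finset (Fin n))
    (emb : Fin m ↪ Fin n) (hrange : Set.range emb = {v | v ∉ S})
    (hgood : GoodDecomp k d (G.comap emb))
    (τ : Sym2 (Fin n) → Fin n) (σ : Sym2 (Fin n) → Fin k)
    (hτ : ∀ e, e ∈ G.edgeSet → (∃ v ∈ e, v ∈ S) → τ e ∈ e ∧ τ e ∈ S)
    (hinj : ∀ e₁ e₂, (e₁ ∈ G.edgeSet ∧ ∃ v ∈ e₁, v ∈ S) →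
        (e₂ ∈ G.edgeSet ∧ ∃ v ∈ e₂, v ∈ S) →
        τ e₁ = τ e₂ → σ e₁ = σ e₂ → e₁ = e₂) :
    GoodDecomp k d G := by
  classical
  obtain ⟨P, ⟨hPsub, hPdisj, hPuni, hPpf⟩, i₀, hFacyc, hFcond⟩ := hgood
  set IS : Set (Sym2 (Fin n)) := {e ∈ G.edgeSet | ∃ v ∈ e, v ∈ S} with hISdef
  set N' : Fin (k+1) → Set (Sym2 (Fin n)) :=
    fun t => {e ∈ IS | i₀.succAbove (σ e) = t} with hN'def
  set P' : Fin (k+1) → Set (Sym2 (Fin n)) :=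
    fun t => Sym2.map emb '' P t ∪ N' t with hP'def
  have hembS : ∀ a : Fin m, emb a ∉ S := by
    intro a
    have : emb a ∈ Set.range emb := ⟨a, rfl⟩
    rwa [hrange] at this
  have hmapped : ∀ t, ∀ e ∈ Sym2.map emb '' P t, e ∈ G.edgeSet ∧ ∀ v ∈ e, v ∉ S := by
    rintro t e ⟨e₀, he₀, rfl⟩
    have he₀' : e₀ ∈ (G.comap emb).edgeSet := hPsub t he₀
    induction e₀ with
    | _ a b =>
      rw [Sym2.map_pair_eq]
      refine ⟨?_, ?_⟩
      · exact (SimpleGraph.mem_edgeSet _).mpr ((SimpleGraph.mem_edgeSet _).mp he₀')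
      · intro v hv
        rw [Sym2.mem_iff] at hv
        rcases hv with rfl | rfl
        · exact hembS a
        · exact hembS b
  have hN'IS : ∀ t, N' t ⊆ IS := fun t e he => he.1
  -- the old F graph and the new one
  have hN'i₀ : N' i₀ = ∅ := by
    ext e
    simp only [hN'def, Set.mem_setOf_eq, Set.mem_empty_iff_false, iff_false, not_and]
    intro _
    exact Fin.succAbove_ne i₀ (σ e)
  have hP'i₀ : P' i₀ = Sym2.map emb '' P i₀ := by
    rw [hP'def]
    simp only [hN'i₀, Set.union_empty]
  have hHF' : SimpleGraph.fromEdgeSet (P' i₀)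
      = (SimpleGraph.fromEdgeSet (P i₀)).map emb := by
    rw [hP'i₀, fromEdgeSet_image]
  refine ⟨P', ⟨?_, ?_, ?_, ?_⟩, i₀, ?_, ?_⟩
  · -- subsets
    rintro t e (hmap | hnew)
    · exact (hmapped t e hmap).1
    · exact (hN'IS t hnew).1
  · -- disjoint
    intro i j hij
    rw [Set.disjoint_left]
    rintro e (hmapi | hnewi) <;> rintro (hmapj | hnewj)
    · obtain ⟨e₁, he₁, rfl⟩ := hmapi
      obtain ⟨e₂, he₂, heq⟩ := hmapj
      have : e₂ = e₁ := Sym2.map.injective emb.injective heq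
      subst this
      exact Set.disjoint_left.mp (hPdisj i j hij) he₁ he₂
    · obtain ⟨v, hv, hvS⟩ := hnewj.1.2
      exact (hmapped i e hmapi).2 v hv hvS
    · obtain ⟨v, hv, hvS⟩ := hnewi.1.2
      exact (hmapped j e hmapj).2 v hv hvS
    · exact hij (hnewi.2 ▸ hnewj.2 ▸ rfl : i = j)
  · -- union
    ext e
    simp only [Set.mem_iUnion]
    constructor
    · rintro ⟨t, hmap | hnew⟩
      · exact (hmapped t e hmap).1
      · exact (hN'IS t hnew).1
    · intro he
      by_cases hinc : ∃ v ∈ e, v ∈ S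
      · exact ⟨i₀.succAbove (σ e), Or.inr ⟨⟨he, hinc⟩, rfl⟩⟩
      · push_neg at hinc
        induction e with
        | _ x y =>
          have hx : x ∈ Set.range emb := by rw [hrange]; exact hinc x (Sym2.mem_mk_left x y)
          have hy : y ∈ Set.range emb := by rw [hrange]; exact hinc y (Sym2.mem_mk_right x y)
          obtain ⟨a, rfl⟩ := hx
          obtain ⟨b, rfl⟩ := hy
          have he₀ : s(a, b) ∈ (G.comap emb).edgeSet :=
            (SimpleGraph.mem_edgeSet _).mpr ((SimpleGraph.mem_edgeSet _).mp he)
          rw [← hPuni] at he₀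
          obtain ⟨t, ht⟩ := Set.mem_iUnion.mp he₀
          exact ⟨t, Or.inl ⟨s(a,b), ht, Sym2.map_pair_eq _ _ _⟩⟩
  · -- pseudoforests
    intro t
    have hmappf : IsPseudoforest (SimpleGraph.fromEdgeSet (Sym2.map emb '' P t)) := by
      rw [fromEdgeSet_image]
      exact pseudoforest_map (hPpf t)
    have := addTails (Sym2.map emb '' P t) (N' t) τ hmappf
      (fun e he => (hτ e (hN'IS t he).1 (hN'IS t he).2).1)
      (fun e₁ h₁ e₂ h₂ heq => hinj e₁ e₂ h₁.1 h₂.1 heq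
        (Fin.succAbove_right_injective (h₁.2.trans h₂.2.symm)))
      (fun e he e' he' hmem => (hmapped t e' he').2 (τ e) hmem
        (hτ e (hN'IS t he).1 (hN'IS t he).2).2)
    exact this
  · -- acyclic
    rw [hHF']
    exact acyclic_map hFacyc
  · -- F component conditions
    rw [hHF']
    intro K
    induction K using SimpleGraph.ConnectedComponent.ind with
    | _ w =>
    by_cases hw : w ∈ Set.range emb
    · obtain ⟨a, rfl⟩ := hw
      set c := (SimpleGraph.fromEdgeSet (P i₀)).connectedComponentMk a with hc
      obtain ⟨hd1, hd2, hd3, hd4⟩ := hFcond c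
      have hE := compEdges_map_eq (f := emb) (H := SimpleGraph.fromEdgeSet (P i₀)) a
      have hEn : (compEdges ((SimpleGraph.fromEdgeSet (P i₀)).map emb)
          (((SimpleGraph.fromEdgeSet (P i₀)).map emb).connectedComponentMk (emb a))).ncard
          = (compEdges (SimpleGraph.fromEdgeSet (P i₀)) c).ncard := by
        rw [hE, Set.ncard_image_of_injective _ (Sym2.map.injective emb.injective)]
      have hdiam : ∀ b : ℕ, compDiamLE (SimpleGraph.fromEdgeSet (P i₀)) c b →
          compDiamLE ((SimpleGraph.fromEdgeSet (P i₀)).map emb)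
            (((SimpleGraph.fromEdgeSet (P i₀)).map emb).connectedComponentMk (emb a)) b := by
        intro b hb u hu v hv
        rw [supp_map_eq] at hu hv
        obtain ⟨x, hx, rfl⟩ := hu
        obtain ⟨y, hy, rfl⟩ := hv
        have hre : (SimpleGraph.fromEdgeSet (P i₀)).Reachable x y := by
          rw [SimpleGraph.ConnectedComponent.mem_supp_iff] at hx hy
          rw [← SimpleGraph.ConnectedComponent.eq, hx, hy]
        exact le_trans (dist_map_le hre) (hb x hx y hy)
      refine ⟨?_, ?_, ?_, ?_⟩
      · rw [hEn]; exact hd1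
      · exact hdiam _ hd2
      · intro hmod; exact hdiam _ (hd3 hmod)
      · intro z hz
        rw [hEn] at hz
        exact hdiam _ (hd4 z hz)
    · have hsupp := supp_isolated (H := SimpleGraph.fromEdgeSet (P i₀)) hw
      have hcE := compEdges_empty_of_singleton hsupp
      have hdiam : ∀ b : ℕ, compDiamLE ((SimpleGraph.fromEdgeSet (P i₀)).map emb)
          (((SimpleGraph.fromEdgeSet (P i₀)).map emb).connectedComponentMk w) b := by
        intro b u hu v hv
        rw [hsupp, Set.mem_singleton_iff] at hu hv
        subst hu; subst hv
        simp [SimpleGraph.dist_self]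
      refine ⟨?_, hdiam _, fun _ => hdiam _, fun z _ => hdiam _⟩
      rw [hcE]
      simp

end Lift

set_option maxHeartbeats 2000000 in
theorem minimal_counterexample_orientation
    (k d : ℕ) (hk : 0 < k) (hd : 0 < d)
    (n : ℕ) (G : SimpleGraph (Fin n))
    (hG : IsCounterexample k d G)
    (hmin : ∀ (m : ℕ) (G' : SimpleGraph (Fin m)), IsCounterexample k d G' → n ≤ m) :
    ∃ o : Sym2 (Fin n) → Fin n, IsOrientation G o ∧
      ∀ v : Fin n, k ≤ outDeg G o v ∧ outDeg G o v ≤ k + 1 := by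
  classical
  rcases Nat.eq_zero_or_pos n with rfl | hn
  · exact ⟨fun e => e.out.1, fun e he => (e.out.1).elim0, fun v => v.elim0⟩
  obtain ⟨hmad, hngood⟩ := hG
  -- Lower bound: every vertex set has at least k|S| incident edges
  have hlow : ∀ S : Finset (Fin n),
      k * S.card ≤ ({e ∈ G.edgeSet | ∃ v ∈ e, v ∈ S}).ncard := by
    by_contra hcon
    push_neg at hcon
    obtain ⟨S₀, hS₀⟩ := hcon
    set g : Finset (Fin n) → ℤ :=
      fun S => (({e ∈ G.edgeSet | ∃ v ∈ e, v ∈ S}).ncard : ℤ) - k * S.card with hgdef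
    obtain ⟨S, -, hSmin⟩ := Finset.exists_min_image (Finset.univ : Finset (Finset (Fin n))) g
      ⟨S₀, Finset.mem_univ _⟩
    have hSneg : g S < 0 := by
      refine lt_of_le_of_lt (hSmin S₀ (Finset.mem_univ _)) ?_
      rw [hgdef]
      simp only [sub_neg]
      exact_mod_cast hS₀
    have hSne : S.Nonempty := by
      rw [Finset.nonempty_iff_ne_empty]
      rintro rfl
      have hempty : {e | e ∈ G.edgeSet ∧ ∃ v ∈ e, v ∈ (∅ : Finset (Fin n))} = ∅ := by
        ext e; simp
      rw [hgdef] at hSneg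
      simp only [hempty, Set.ncard_empty, Finset.card_empty] at hSneg
      norm_num at hSneg
    -- Hall condition and absorption
    set IF : Finset (Fin n) → Finset (Sym2 (Fin n)) :=
      fun U => (Set.toFinite {e ∈ G.edgeSet | ∃ v ∈ e, v ∈ U}).toFinset with hIFdef
    have hIFcard : ∀ U, (IF U).card = ({e ∈ G.edgeSet | ∃ v ∈ e, v ∈ U}).ncard := by
      intro U
      rw [hIFdef]
      exact (Set.ncard_eq_toFinset_card _ _).symm
    have hhall : ∀ A : Finset {e : Sym2 (Fin n) // e ∈ IF S},
        A.card ≤ (A.biUnion (fun x => (S.filter (· ∈ x.1)) ×ˢ (Finset.univ : Finset (Fin k)))).card := by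
      intro A
      set T : Finset (Fin n) := A.biUnion (fun x => S.filter (· ∈ x.1)) with hTdef
      have hbi : A.biUnion (fun x => (S.filter (· ∈ x.1)) ×ˢ (Finset.univ : Finset (Fin k)))
          = T ×ˢ (Finset.univ : Finset (Fin k)) := by
        ext ⟨v, j⟩
        simp only [Finset.mem_biUnion, Finset.mem_product, Finset.mem_univ, and_true, hTdef]
      rw [hbi, Finset.card_product, Finset.card_univ, Fintype.card_fin]
      have hTS : T ⊆ S := by
        rw [hTdef]
        exact Finset.biUnion_subset.mpr (fun x _ => Finset.filter_subset _ _)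
      -- A injects into (IF S) \ (IF (S \ T))
      have hsub : A.image Subtype.val ⊆ IF S \ IF (S \ T) := by
        intro e he
        obtain ⟨x, hxA, rfl⟩ := Finset.mem_image.mp he
        rw [Finset.mem_sdiff]
        refine ⟨x.2, ?_⟩
        simp only [hIFdef, Set.Finite.mem_toFinset]
        rintro ⟨-, v, hv, hvST⟩
        rw [Finset.mem_sdiff] at hvST
        refine hvST.2 ?_
        rw [hTdef]
        exact Finset.mem_biUnion.mpr ⟨x, hxA, Finset.mem_filter.mpr ⟨hvST.1, hv⟩⟩
      have hsub2 : IF (S \ T) ⊆ IF S := by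
        intro e he
        simp only [hIFdef, Set.Finite.mem_toFinset] at he ⊢
        obtain ⟨he1, v, hv, hvS⟩ := he
        exact ⟨he1, v, hv, (Finset.mem_sdiff.mp hvS).1⟩
      have hcard1 : A.card ≤ (IF S).card - (IF (S \ T)).card := by
        calc A.card = (A.image Subtype.val).card :=
              (Finset.card_image_of_injective A Subtype.val_injective).symm
          _ ≤ (IF S \ IF (S \ T)).card := Finset.card_le_card hsub
          _ = (IF S).card - (IF (S \ T)).card := Finset.card_sdiff_of_subset hsub2
      have hmin2 : g S ≤ g (S \ T) := hSmin _ (Finset.mem_univ _)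
      rw [hgdef] at hmin2
      simp only [← hIFcard] at hmin2
      have hTcardle : T.card ≤ S.card := Finset.card_le_card hTS
      have hST : (S \ T).card = S.card - T.card := Finset.card_sdiff_of_subset hTS
      have hIFle : (IF (S \ T)).card ≤ (IF S).card := Finset.card_le_card hsub2
      -- conclude over ℤ
      have : (A.card : ℤ) ≤ k * T.card := by
        have h1 : (A.card : ℤ) ≤ (IF S).card - (IF (S \ T)).card := by
          rw [← Nat.cast_sub hIFle]
          exact_mod_cast hcard1
        have h2 : ((S \ T).card : ℤ) = S.card - T.card := by
          rw [hST, Nat.cast_sub hTcardle]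
        have h3 : ((k : ℤ) * ((S \ T).card : ℤ)) = k * S.card - k * T.card := by
          rw [h2]; ring
        linarith [h1, hmin2, h3]
      have : (A.card : ℤ) ≤ (T.card * k : ℕ) := by push_cast; linarith
      exact_mod_cast this
    obtain ⟨f, hfinj, hfmem⟩ :=
      (Finset.all_card_le_biUnion_card_iff_exists_injective
        (fun x : {e : Sym2 (Fin n) // e ∈ IF S} =>
          (S.filter (· ∈ x.1)) ×ˢ (Finset.univ : Finset (Fin k)))).mp hhall
    -- the deleted graph
    set m := (Sᶜ : Finset (Fin n)).card with hmdef
    set e0 := (Sᶜ : Finset (Fin n)).orderIsoOfFin rfl with he0def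
    set emb : Fin m ↪ Fin n :=
      ⟨fun i => (e0 i : Fin n), fun i j hij => by
        apply e0.injective
        exact Subtype.val_injective hij⟩ with hembdef
    have hrange : Set.range emb = {v | v ∉ S} := by
      ext v
      constructor
      · rintro ⟨i, rfl⟩
        have h2 := (e0 i).2
        rw [Finset.mem_compl] at h2
        exact h2
      · intro hv
        refine ⟨e0.symm ⟨v, Finset.mem_compl.mpr hv⟩, ?_⟩
        exact congrArg Subtype.val (e0.apply_symm_apply _)
    have hmlt : m < n := by
      rw [hmdef, Finset.card_compl, Fintype.card_fin]
      have := hSne.card_pos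
      omega
    have hgood' : GoodDecomp k d (G.comap emb) := by
      by_contra hng
      have := hmin m (G.comap emb) ⟨madLE_comap G emb hmad, hng⟩
      omega
    -- absorption functions
    set τ : Sym2 (Fin n) → Fin n :=
      fun e => if h : e ∈ IF S then (f ⟨e, h⟩).1 else e.out.1 with hτdef
    set σ : Sym2 (Fin n) → Fin k :=
      fun e => if h : e ∈ IF S then (f ⟨e, h⟩).2 else ⟨0, hk⟩ with hσdef
    have hmemIF : ∀ e, e ∈ G.edgeSet → (∃ v ∈ e, v ∈ S) → e ∈ IF S := by
      intro e he hinc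
      simp only [hIFdef, Set.Finite.mem_toFinset]
      exact ⟨he, hinc⟩
    have hfS : ∀ x, (f x).1 ∈ S ∧ (f x).1 ∈ x.1 := by
      intro x
      have := hfmem x
      rw [Finset.mem_product, Finset.mem_filter] at this
      exact ⟨this.1.1, this.1.2⟩
    have hτm : ∀ e, e ∈ G.edgeSet → (∃ v ∈ e, v ∈ S) → τ e ∈ e ∧ τ e ∈ S := by
      intro e he hinc
      have h := hmemIF e he hinc
      rw [hτdef]
      simp only [dif_pos h]
      exact ⟨(hfS ⟨e, h⟩).2, (hfS ⟨e, h⟩).1⟩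
    have hinjτσ : ∀ e₁ e₂, (e₁ ∈ G.edgeSet ∧ ∃ v ∈ e₁, v ∈ S) →
        (e₂ ∈ G.edgeSet ∧ ∃ v ∈ e₂, v ∈ S) →
        τ e₁ = τ e₂ → σ e₁ = σ e₂ → e₁ = e₂ := by
      intro e₁ e₂ h₁ h₂ hτe hσe
      have m₁ := hmemIF e₁ h₁.1 h₁.2
      have m₂ := hmemIF e₂ h₂.1 h₂.2
      rw [hτdef] at hτe
      rw [hσdef] at hσe
      simp only [dif_pos m₁, dif_pos m₂] at hτe hσe
      have : f ⟨e₁, m₁⟩ = f ⟨e₂, m₂⟩ := Prod.ext hτe hσe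
      exact Subtype.mk_eq_mk.mp (hfinj this)
    exact hngood (lift_good G S emb hrange hgood' τ σ hτm hinjτσ)
  -- Upper bound on induced densities
  have hupp : ∀ T : Finset (Fin n),
      ({e ∈ G.edgeSet | ∀ v ∈ e, v ∈ T}).ncard ≤ (k + 1) * T.card :=
    density_le hk hd G hmad
    -- ### The Hall argument with dummy elements ###
  set EF : Finset (Sym2 (Fin n)) := (Set.toFinite G.edgeSet).toFinset with hEFdef
  have hEFmem : ∀ e, e ∈ EF ↔ e ∈ G.edgeSet := by
    intro e; simp only [hEFdef, Set.Finite.mem_toFinset]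
  set m0 := EF.card with hm0def
  have hEFncard : G.edgeSet.ncard = m0 := by
    rw [hm0def, hEFdef]; exact Set.ncard_eq_toFinset_card _ _
  have hm0 : m0 ≤ (k+1) * n := by
    have h1 := hupp Finset.univ
    have huniv : {e | e ∈ G.edgeSet ∧ ∀ v ∈ e, v ∈ (Finset.univ : Finset (Fin n))}
        = G.edgeSet := by
      ext e; simp
    rw [huniv, hEFncard, Finset.card_univ, Fintype.card_fin] at h1
    exact h1
  set D := (k+1)*n - m0 with hDdef
  set t : ({e : Sym2 (Fin n) // e ∈ EF} ⊕ Fin D) → Finset (Fin n × Fin (k+1)) :=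
    Sum.elim (fun x => (Finset.univ.filter (· ∈ x.1)) ×ˢ (Finset.univ : Finset (Fin (k+1))))
      (fun _ => (Finset.univ : Finset (Fin n)) ×ˢ {Fin.last k}) with htdef
  have hhall2 : ∀ s : Finset ({e : Sym2 (Fin n) // e ∈ EF} ⊕ Fin D),
      s.card ≤ (s.biUnion t).card := by
    intro s
    set W : Finset (Fin n) := s.toLeft.biUnion (fun x => Finset.univ.filter (· ∈ x.1))
      with hWdef
    have hsEcard : s.toLeft.card ≤ (k+1) * W.card := by
      have hsub : s.toLeft.image Subtype.val
          ⊆ (Set.toFinite {e | e ∈ G.edgeSet ∧ ∀ v ∈ e, v ∈ W}).toFinset := by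
        intro e he
        obtain ⟨x, hx, rfl⟩ := Finset.mem_image.mp he
        rw [Set.Finite.mem_toFinset]
        refine ⟨(hEFmem _).mp x.2, fun v hv => ?_⟩
        rw [hWdef]
        exact Finset.mem_biUnion.mpr ⟨x, hx, Finset.mem_filter.mpr ⟨Finset.mem_univ _, hv⟩⟩
      calc s.toLeft.card = (s.toLeft.image Subtype.val).card :=
            (Finset.card_image_of_injective _ Subtype.val_injective).symm
        _ ≤ _ := Finset.card_le_card hsub
        _ = ({e | e ∈ G.edgeSet ∧ ∀ v ∈ e, v ∈ W}).ncard :=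
            (Set.ncard_eq_toFinset_card _ _).symm
        _ ≤ (k+1) * W.card := hupp W
    rcases s.toRight.eq_empty_or_nonempty with hR | hR
    · -- no dummies in s
      have hbi : s.biUnion t = W ×ˢ (Finset.univ : Finset (Fin (k+1))) := by
        ext ⟨v, j⟩
        simp only [Finset.mem_biUnion, Finset.mem_product, Finset.mem_univ, and_true]
        constructor
        · rintro ⟨x, hx, hp⟩
          cases x with
          | inl a =>
            rw [htdef] at hp
            simp only [Sum.elim_inl, Finset.mem_product, Finset.mem_filter,
              Finset.mem_univ, true_and, and_true] at hp
            rw [hWdef]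
            exact Finset.mem_biUnion.mpr
              ⟨a, Finset.mem_toLeft.mpr hx, Finset.mem_filter.mpr ⟨Finset.mem_univ _, hp⟩⟩
          | inr b =>
            have : b ∈ s.toRight := Finset.mem_toRight.mpr hx
            rw [hR] at this
            exact absurd this (Finset.notMem_empty b)
        · intro hv
          rw [hWdef] at hv
          obtain ⟨x, hx, hvx⟩ := Finset.mem_biUnion.mp hv
          refine ⟨Sum.inl x, Finset.mem_toLeft.mp hx, ?_⟩
          rw [htdef]
          simp only [Sum.elim_inl, Finset.mem_product, Finset.mem_univ, and_true]
          exact hvx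
      have hzero : s.toRight.card = 0 := by rw [hR]; rfl
      have hscard := (Finset.card_toLeft_add_card_toRight (u := s))
      rw [hbi, Finset.card_product, Finset.card_univ, Fintype.card_fin, Nat.mul_comm]
      omega
    · -- some dummy in s
      have hbi : s.biUnion t = (W ×ˢ (Finset.univ : Finset (Fin (k+1))))
          ∪ ((Finset.univ : Finset (Fin n)) ×ˢ {Fin.last k}) := by
        ext ⟨v, j⟩
        simp only [Finset.mem_biUnion, Finset.mem_union, Finset.mem_product,
          Finset.mem_univ, and_true, true_and, Finset.mem_singleton]
        constructor
        · rintro ⟨x, hx, hp⟩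
          cases x with
          | inl a =>
            rw [htdef] at hp
            simp only [Sum.elim_inl, Finset.mem_product, Finset.mem_filter,
              Finset.mem_univ, true_and, and_true] at hp
            refine Or.inl ?_
            rw [hWdef]
            exact Finset.mem_biUnion.mpr
              ⟨a, Finset.mem_toLeft.mpr hx, Finset.mem_filter.mpr ⟨Finset.mem_univ _, hp⟩⟩
          | inr b =>
            rw [htdef] at hp
            simp only [Sum.elim_inr, Finset.mem_product, Finset.mem_univ, true_and,
              Finset.mem_singleton] at hp
            exact Or.inr hp
        · rintro (hv | hj)
          · rw [hWdef] at hv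
            obtain ⟨x, hx, hvx⟩ := Finset.mem_biUnion.mp hv
            refine ⟨Sum.inl x, Finset.mem_toLeft.mp hx, ?_⟩
            rw [htdef]
            simp only [Sum.elim_inl, Finset.mem_product, Finset.mem_univ, and_true]
            exact hvx
          · obtain ⟨b, hb⟩ := hR
            refine ⟨Sum.inr b, Finset.mem_toRight.mp hb, ?_⟩
            rw [htdef]
            simp only [Sum.elim_inr, Finset.mem_product, Finset.mem_univ, true_and,
              Finset.mem_singleton]
            exact hj
      have hinter : (W ×ˢ (Finset.univ : Finset (Fin (k+1))))
          ∩ ((Finset.univ : Finset (Fin n)) ×ˢ ({Fin.last k} : Finset (Fin (k+1))))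
          = W ×ˢ ({Fin.last k} : Finset (Fin (k+1))) := by
        ext ⟨v, j⟩
        simp only [Finset.mem_inter, Finset.mem_product, Finset.mem_univ, and_true,
          true_and, Finset.mem_singleton]
        try tauto
      have hcu := Finset.card_union_add_card_inter
        (W ×ˢ (Finset.univ : Finset (Fin (k+1))))
        ((Finset.univ : Finset (Fin n)) ×ˢ ({Fin.last k} : Finset (Fin (k+1))))
      rw [hinter] at hcu
      simp only [Finset.card_product, Finset.card_univ, Fintype.card_fin,
        Finset.card_singleton, mul_one, one_mul] at hcu
      -- disjointness counting
      set X := s.toLeft.image Subtype.val with hXdef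
      set Y := (Set.toFinite {e | e ∈ G.edgeSet ∧ ∃ v ∈ e, v ∈ Wᶜ}).toFinset with hYdef
      have hXY : Disjoint X Y := by
        rw [Finset.disjoint_left]
        intro e heX heY
        obtain ⟨x, hx, rfl⟩ := Finset.mem_image.mp heX
        rw [hYdef, Set.Finite.mem_toFinset] at heY
        obtain ⟨-, v, hv, hvW⟩ := heY
        rw [Finset.mem_compl] at hvW
        refine hvW ?_
        rw [hWdef]
        exact Finset.mem_biUnion.mpr ⟨x, hx, Finset.mem_filter.mpr ⟨Finset.mem_univ _, hv⟩⟩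
      have hXYsub : X ∪ Y ⊆ EF := by
        intro e he
        rcases Finset.mem_union.mp he with he | he
        · obtain ⟨x, -, rfl⟩ := Finset.mem_image.mp he
          exact x.2
        · rw [hYdef, Set.Finite.mem_toFinset] at he
          exact (hEFmem e).mpr he.1
      have hb1 : X.card + Y.card ≤ m0 := by
        rw [← Finset.card_union_of_disjoint hXY]
        exact Finset.card_le_card hXYsub
      have hXcard : X.card = s.toLeft.card :=
        Finset.card_image_of_injective _ Subtype.val_injective
      have hYcard : Y.card = ({e | e ∈ G.edgeSet ∧ ∃ v ∈ e, v ∈ Wᶜ}).ncard := by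
        rw [hYdef]; exact (Set.ncard_eq_toFinset_card _ _).symm
      have hb2 : k * Wᶜ.card ≤ Y.card := by rw [hYcard]; exact hlow Wᶜ
      have hb3 : s.toRight.card ≤ D := by
        have := Finset.card_le_univ s.toRight
        simpa using this
      have hWle : W.card ≤ n := by
        have := Finset.card_le_univ W
        simpa using this
      have hcompl : Wᶜ.card = n - W.card := by
        rw [Finset.card_compl, Fintype.card_fin]
      have hscard := (Finset.card_toLeft_add_card_toRight (u := s))
      -- pass to ℤ
      have hz1 : ((s.biUnion t).card : ℤ) = (W.card : ℤ) * (k+1) + n - W.card := by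
        rw [hbi]
        have : ((W ×ˢ (Finset.univ : Finset (Fin (k+1)))
            ∪ (Finset.univ : Finset (Fin n)) ×ˢ ({Fin.last k} : Finset (Fin (k+1)))).card : ℤ)
            + W.card = W.card * (k+1) + n := by exact_mod_cast congrArg Nat.cast hcu
        linarith
      have hz2 : ((k:ℤ)) * ((n:ℤ) - W.card) ≤ Y.card := by
        have : ((k * Wᶜ.card : ℕ) : ℤ) ≤ (Y.card : ℤ) := by exact_mod_cast hb2
        rw [Nat.cast_mul, hcompl, Nat.cast_sub hWle] at this
        exact this
      have hz3 : ((s.toRight.card : ℤ)) ≤ (k+1) * n - m0 := by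
        have : ((D:ℕ) : ℤ) = (k+1) * n - m0 := by
          rw [hDdef, Nat.cast_sub hm0]
          push_cast; ring
        rw [← this]
        exact_mod_cast hb3
      have hz4 : (s.card : ℤ) = s.toLeft.card + s.toRight.card := by
        exact_mod_cast congrArg Nat.cast hscard.symm
      have hz5 : (s.toLeft.card : ℤ) + Y.card ≤ m0 := by
        rw [← hXcard]
        exact_mod_cast hb1
      have hgoal : (s.card : ℤ) ≤ ((s.biUnion t).card : ℤ) := by
        rw [hz1]
        have hexp : (k:ℤ) * ((n:ℤ) - W.card) = k * n - k * W.card := by ring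
        nlinarith [hz2, hz3, hz4, hz5, hexp]
      exact_mod_cast hgoal
  obtain ⟨f2, hf2inj, hf2mem⟩ :=
    (Finset.all_card_le_biUnion_card_iff_exists_injective t).mp hhall2
  have hcards : Fintype.card ({e : Sym2 (Fin n) // e ∈ EF} ⊕ Fin D)
      = Fintype.card (Fin n × Fin (k+1)) := by
    rw [Fintype.card_sum, Fintype.card_coe, Fintype.card_prod, Fintype.card_fin,
      Fintype.card_fin, Fintype.card_fin, ← hm0def, hDdef,
      Nat.add_sub_cancel' hm0, Nat.mul_comm]
  have hbij : Function.Bijective f2 :=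
    (Fintype.bijective_iff_injective_and_card f2).mpr ⟨hf2inj, hcards⟩
  have htl : ∀ x : {e : Sym2 (Fin n) // e ∈ EF}, (f2 (Sum.inl x)).1 ∈ x.1 := by
    intro x
    have h := hf2mem (Sum.inl x)
    rw [htdef] at h
    simp only [Sum.elim_inl, Finset.mem_product, Finset.mem_filter, Finset.mem_univ,
      true_and, and_true] at h
    exact h
  have hlastd : ∀ j : Fin D, (f2 (Sum.inr j)).2 = Fin.last k := by
    intro j
    have h := hf2mem (Sum.inr j)
    rw [htdef] at h
    simp only [Sum.elim_inr, Finset.mem_product, Finset.mem_univ, true_and,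
      Finset.mem_singleton] at h
    exact h
  refine ⟨fun e => if h : e ∈ EF then Sym2.Mem.other (htl ⟨e, h⟩) else e.out.1, ?_, ?_⟩
  · intro e he
    simp only [dif_pos ((hEFmem e).mpr he)]
    exact Sym2.other_mem _
  · intro v
    have key : ∀ (e : Sym2 (Fin n)) (h : e ∈ EF), v ∈ e →
        (((if h' : e ∈ EF then Sym2.Mem.other (htl ⟨e, h'⟩) else e.out.1) ≠ v)
          ↔ (f2 (Sum.inl ⟨e, h⟩)).1 = v) := by
      intro e h hv
      simp only [dif_pos h]
      have hspec : s((f2 (Sum.inl ⟨e,h⟩)).1, Sym2.Mem.other (htl ⟨e,h⟩)) = e :=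
        Sym2.other_spec _
      have hne2 : Sym2.Mem.other (htl ⟨e,h⟩) ≠ (f2 (Sum.inl ⟨e,h⟩)).1 :=
        Sym2.other_ne (G.not_isDiag_of_mem_edgeSet ((hEFmem e).mp h)) _
      rw [← hspec, Sym2.mem_iff] at hv
      constructor
      · intro hoe
        rcases hv with hv | hv
        · exact hv.symm
        · exact absurd hv.symm hoe
      · intro hav
        rw [← hav]
        exact hne2
    have hset : {e | e ∈ G.edgeSet ∧ v ∈ e ∧
        (if h : e ∈ EF then Sym2.Mem.other (htl ⟨e, h⟩) else e.out.1) ≠ v}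
        = ↑((EF.attach.filter (fun x => (f2 (Sum.inl x)).1 = v)).image Subtype.val) := by
      ext e
      simp only [Set.mem_setOf_eq, Finset.coe_image, Set.mem_image, Finset.mem_coe,
        Finset.mem_filter, Finset.mem_attach, true_and]
      constructor
      · rintro ⟨he, hv, hoe⟩
        have h := (hEFmem e).mpr he
        exact ⟨⟨e, h⟩, (key e h hv).mp hoe, rfl⟩
      · rintro ⟨⟨e', h'⟩, hfe, rfl⟩
        have hv : v ∈ e' := by rw [← hfe]; exact htl _
        exact ⟨(hEFmem _).mp h', hv, (key _ h' hv).mpr hfe⟩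
    have houtdeg : outDeg G
        (fun e => if h : e ∈ EF then Sym2.Mem.other (htl ⟨e, h⟩) else e.out.1) v
        = (EF.attach.filter (fun x => (f2 (Sum.inl x)).1 = v)).card := by
      unfold outDeg
      rw [hset, Set.ncard_coe_finset,
        Finset.card_image_of_injective _ Subtype.val_injective]
    set C := Finset.univ.filter
      (fun x : {e : Sym2 (Fin n) // e ∈ EF} ⊕ Fin D => (f2 x).1 = v) with hCdef
    have hCimage : C.image f2 = {v} ×ˢ (Finset.univ : Finset (Fin (k+1))) := by
      ext p
      simp only [Finset.mem_image, hCdef, Finset.mem_filter, Finset.mem_univ, true_and,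
        Finset.mem_product, Finset.mem_singleton, and_true]
      constructor
      · rintro ⟨x, hx, rfl⟩; exact hx
      · intro hp
        obtain ⟨x, hx⟩ := hbij.2 p
        exact ⟨x, by rw [hx]; exact hp, hx⟩
    have hCcard : C.card = k+1 := by
      have h1 := Finset.card_image_of_injective C hf2inj
      rw [hCimage] at h1
      simp only [Finset.card_product, Finset.card_singleton, Finset.card_univ,
        Fintype.card_fin, one_mul] at h1
      exact h1.symm
    have hCleft : C.toLeft = EF.attach.filter (fun x => (f2 (Sum.inl x)).1 = v) := by
      ext x
      simp only [Finset.mem_toLeft, hCdef, Finset.mem_filter, Finset.mem_univ, true_and,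
        Finset.mem_attach]
    have hCright : C.toRight.card ≤ 1 := by
      rw [Finset.card_le_one]
      intro a ha b hb
      rw [Finset.mem_toRight, hCdef, Finset.mem_filter] at ha hb
      have hfa : f2 (Sum.inr a) = (v, Fin.last k) := Prod.ext ha.2 (hlastd a)
      have hfb : f2 (Sum.inr b) = (v, Fin.last k) := Prod.ext hb.2 (hlastd b)
      have := hf2inj (hfa.trans hfb.symm)
      exact Sum.inr_injective this
    have hsum := (Finset.card_toLeft_add_card_toRight (u := C))
    rw [hCleft] at hsum
    rw [houtdeg]
    omega
end

section
/- Let T be a finite tree and v a vertex of T. Then there is a path in T starting at v whose length (number of edges) is at least ⌈diam(T)/2⌉. Moreover, if v does not lie on any path of T of length diam(T), then there is a path in T starting at v of length at least ⌈diam(T)/2⌉ + 1. -/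
open SimpleGraph

/-- In an acyclic graph, every walk has the same length parity as any path with the
same endpoints. -/
lemma walk_length_parity_of_isAcyclic {V : Type*} {G : SimpleGraph V} (hG : G.IsAcyclic)
    {a b : V} (w : G.Walk a b) : ∀ (p : G.Walk a b), p.IsPath →
      w.length % 2 = p.length % 2 := by
  classical
  induction w with
  | nil =>
    intro p hp
    rw [(SimpleGraph.Walk.isPath_iff_eq_nil (p := p)).mp hp]
  | @cons a c b h w ih =>
    intro p hp
    by_cases hc : c ∈ p.support
    · -- the unique path from `a` to `c` is the single edge, so `p.dropUntil c`
      -- is one shorter than `p`.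
      have hq : (p.dropUntil c hc).IsPath := hp.dropUntil hc
      have htake : (p.takeUntil c hc).IsPath := hp.takeUntil hc
      have hedge : (SimpleGraph.Walk.cons h SimpleGraph.Walk.nil).IsPath := by
        simp [SimpleGraph.Walk.cons_isPath_iff, h.ne]
      have huniq := hG.path_unique ⟨p.takeUntil c hc, htake⟩ ⟨_, hedge⟩
      have hlen1 : (p.takeUntil c hc).length = 1 := by
        have := congrArg (fun q : G.Path a c => q.val.length) huniq
        simpa using this
      have hspec := congrArg SimpleGraph.Walk.length (p.take_spec hc)
      rw [SimpleGraph.Walk.length_append, hlen1] at hspec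
      have hih := ih (p.dropUntil c hc) hq
      simp only [SimpleGraph.Walk.length_cons]
      omega
    · have hq : (SimpleGraph.Walk.cons h.symm p).IsPath :=
        (SimpleGraph.Walk.cons_isPath_iff _ _).mpr ⟨hp, hc⟩
      have hih := ih _ hq
      simp only [SimpleGraph.Walk.length_cons] at hih ⊢
      omega

theorem exists_long_path_from_vertex
    (V : Type) [Fintype V] (T : SimpleGraph V)
    (hconn : T.Connected) (hacyclic : T.IsAcyclic) (v : V) :
    (∃ (u : V) (p : T.Walk v u), p.IsPath ∧ (T.diam + 1) / 2 ≤ p.length) ∧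
    ((¬ ∃ (a b : V) (q : T.Walk a b), q.IsPath ∧ q.length = T.diam ∧ v ∈ q.support) →
      ∃ (u : V) (p : T.Walk v u), p.IsPath ∧ (T.diam + 1) / 2 + 1 ≤ p.length) := by
  haveI : Nonempty V := hconn.nonempty
  obtain ⟨a, b, hab⟩ := T.exists_dist_eq_diam
  obtain ⟨pa, hpa, hpal⟩ := hconn.exists_path_of_dist v a
  obtain ⟨pb, hpb, hpbl⟩ := hconn.exists_path_of_dist v b
  -- triangle inequality
  have htri : T.diam ≤ T.dist v a + T.dist v b := by
    calc T.diam = T.dist a b := hab.symm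
    _ ≤ T.dist a v + T.dist v b := hconn.dist_triangle
    _ = T.dist v a + T.dist v b := by rw [SimpleGraph.dist_comm]
  -- parity: the walk `a → v → b` has the same parity as the shortest path `a → b`
  obtain ⟨q0, hq0, hq0l⟩ := hconn.exists_path_of_dist a b
  have hparity : (T.dist v a + T.dist v b) % 2 = T.diam % 2 := by
    have := walk_length_parity_of_isAcyclic hacyclic (pa.reverse.append pb) q0 hq0
    rwa [SimpleGraph.Walk.length_append, SimpleGraph.Walk.length_reverse,
      hpal, hpbl, hq0l, hab] at this
  constructor
  · -- part 1
    rcases le_total (T.dist v a) (T.dist v b) with hle | hle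
    · exact ⟨b, pb, hpb, by omega⟩
    · exact ⟨a, pa, hpa, by omega⟩
  · -- part 2
    intro hno
    have hne : T.dist v a + T.dist v b ≠ T.diam := by
      intro heq
      apply hno
      refine ⟨a, b, pa.reverse.append pb, ?_, ?_, ?_⟩
      · apply SimpleGraph.Walk.isPath_of_length_eq_dist
        rw [SimpleGraph.Walk.length_append, SimpleGraph.Walk.length_reverse,
          hpal, hpbl, heq, hab]
      · rw [SimpleGraph.Walk.length_append, SimpleGraph.Walk.length_reverse,
          hpal, hpbl, heq]
      · rw [SimpleGraph.Walk.mem_support_append_iff]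
        exact Or.inl (pa.reverse.end_mem_support)
    rcases le_total (T.dist v a) (T.dist v b) with hle | hle
    · exact ⟨b, pb, hpb, by omega⟩
    · exact ⟨a, pa, hpa, by omega⟩
end
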